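/- arXiv:1904.03662 — 10 statements merged into one kernel-verified Lean document; each statement's English description precedes it below -/
import Mathlib

section
/- Let (α_n) be a sequence of nonnegative real numbers. Then α_n → 0 as n → ∞ if and only if 2^{-n} * ∑_{k=1}^n 2^k α_k → 0 as n → ∞. -/
/-!
Writing `β` for the dyadic Cesàro means, `β (n + 1) = α (n + 1) + β n / 2`. Hence
`α (n + 1) = β (n + 1) - β n / 2`, which tends to `0` when `β` does; conversely `|β|` obeys
`|β (n + 1)| ≤ |β n| / 2 + |α (n + 1)|`, and a sequence contracted by a factor `r < 1` up to
errors tending to `0` tends to `0` itself.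
-/

open Filter Topology

theorem tendsto_zero_of_le_mul_add {u a : ℕ → ℝ} {r : ℝ} (hr₀ : 0 ≤ r) (hr₁ : r < 1)
    (hu : ∀ n, 0 ≤ u n) (hstep : ∀ n, u (n + 1) ≤ r * u n + a n)
    (ha : Tendsto a atTop (𝓝 0)) : Tendsto u atTop (𝓝 0) := by
  refine tendsto_order.2 ⟨fun b hb => .of_forall fun n => hb.trans_le (hu n), fun δ hδ => ?_⟩
  obtain ⟨N, hN⟩ := eventually_atTop.1 <|
    (tendsto_order.1 ha).2 (δ / 2 * (1 - r)) (by nlinarith)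
  -- `δ / 2` is a fixed point of `x ↦ r * x + δ / 2 * (1 - r)`, so the excess over it decays like `r ^ k`.
  have hbound : ∀ k, u (N + k) ≤ r ^ k * u N + δ / 2 := by
    intro k
    induction k with
    | zero => simpa using (half_pos hδ).le
    | succ k ih =>
      calc u (N + (k + 1)) ≤ r * u (N + k) + a (N + k) := hstep (N + k)
        _ ≤ r * (r ^ k * u N + δ / 2) + δ / 2 * (1 - r) :=
          add_le_add (mul_le_mul_of_nonneg_left ih hr₀) (hN _ (Nat.le_add_right N k)).le
        _ = r ^ (k + 1) * u N + δ / 2 := by ring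
  have hdecay : Tendsto (fun k => r ^ k * u N) atTop (𝓝 0) := by
    simpa using (tendsto_pow_atTop_nhds_zero_of_lt_one hr₀ hr₁).mul_const (u N)
  obtain ⟨K, hK⟩ := eventually_atTop.1 <| (tendsto_order.1 hdecay).2 (δ / 2) (half_pos hδ)
  refine eventually_atTop.2 ⟨N + K, fun n hn => ?_⟩
  obtain ⟨k, rfl⟩ := Nat.exists_eq_add_of_le (le_trans (Nat.le_add_right N K) hn)
  linarith [hbound k, hK k (by omega)]

noncomputable def dyadicCesaro (α : ℕ → ℝ) (n : ℕ) : ℝ :=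
  (1 / 2 : ℝ) ^ n * ∑ k ∈ Finset.Icc 1 n, (2 : ℝ) ^ k * α k

theorem dyadicCesaro_succ (α : ℕ → ℝ) (n : ℕ) :
    dyadicCesaro α (n + 1) = α (n + 1) + dyadicCesaro α n / 2 := by
  have hinv : (1 / 2 : ℝ) ^ n * 2 ^ n = 1 := by
    rw [← mul_pow]; norm_num
  rw [dyadicCesaro, dyadicCesaro, Finset.sum_Icc_succ_top (Nat.le_add_left 1 n)]
  linear_combination α (n + 1) * hinv

theorem tendsto_dyadicCesaro_zero {α : ℕ → ℝ} (h : Tendsto α atTop (𝓝 0)) :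
    Tendsto (dyadicCesaro α) atTop (𝓝 0) := by
  have hstep (n : ℕ) : |dyadicCesaro α (n + 1)| ≤ 1 / 2 * |dyadicCesaro α n| + |α (n + 1)| := by
    rw [dyadicCesaro_succ]
    calc |α (n + 1) + dyadicCesaro α n / 2| ≤ |α (n + 1)| + |dyadicCesaro α n / 2| := abs_add_le _ _
      _ = 1 / 2 * |dyadicCesaro α n| + |α (n + 1)| := by rw [abs_div, abs_two]; ring
  have ha : Tendsto (fun n => |α (n + 1)|) atTop (𝓝 0) := by
    simpa using (h.comp (tendsto_add_atTop_nat 1)).abs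
  exact tendsto_zero_iff_abs_tendsto_zero _ |>.2 <|
    tendsto_zero_of_le_mul_add (by norm_num) (by norm_num) (fun n => abs_nonneg _) hstep ha

theorem tendsto_zero_of_tendsto_dyadicCesaro_zero {α : ℕ → ℝ}
    (h : Tendsto (dyadicCesaro α) atTop (𝓝 0)) : Tendsto α atTop (𝓝 0) := by
  have hdiff : Tendsto (fun n => dyadicCesaro α (n + 1) - dyadicCesaro α n / 2) atTop (𝓝 0) := by
    simpa using (h.comp (tendsto_add_atTop_nat 1)).sub (h.div_const 2)
  simp_rw [dyadicCesaro_succ, add_sub_cancel_right] at hdiff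
  exact (tendsto_add_atTop_iff_nat 1).1 hdiff

theorem tendsto_zero_iff_dyadic_cesaro_tendsto_zero_general (α : ℕ → ℝ) :
    Filter.Tendsto α Filter.atTop (𝓝 0) ↔
      Filter.Tendsto (fun n => (1/2 : ℝ) ^ n * ∑ k ∈ Finset.Icc 1 n, (2 : ℝ) ^ k * α k)
        Filter.atTop (𝓝 0) :=
  ⟨tendsto_dyadicCesaro_zero, tendsto_zero_of_tendsto_dyadicCesaro_zero⟩

theorem tendsto_zero_iff_dyadic_cesaro_tendsto_zero (α : ℕ → ℝ) (hα : ∀ n, 0 ≤ α n) :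
    Filter.Tendsto α Filter.atTop (𝓝 0) ↔
      Filter.Tendsto (fun n => (1/2 : ℝ) ^ n * ∑ k ∈ Finset.Icc 1 n, (2 : ℝ) ^ k * α k)
        Filter.atTop (𝓝 0) :=
  tendsto_zero_iff_dyadic_cesaro_tendsto_zero_general α
end

section
/- Let h₁, h₃ : [0,∞) → ℝ be measurable with 0 ≤ h₁ ≤ 1 and h₃² ≤ h₁ a.e., and let m₃(t) = ∫_0^t h₃(s) ds. Define p(t) = sup_{x ≥ t} (x ∫_x^∞ h₁(s) ds)^{1/2} and assume p(t) < ∞ for all t > 0. Then for all 0 < x < y: |m₃(y) − m₃(x)| ≤ p(x)(1 + log(y/x)). -/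
/-!
Write `P = p x`, so that `s ∫_s^∞ h₁ ≤ P²` for every `s ≥ x`. By Tonelli,
`∫_x^y t h₁ = x ∫_x^y h₁ + ∫_x^y ∫_s^y h₁ dt ds ≤ P² + ∫_x^y P² / s ds = P² (1 + log (y / x))`.
For every `q > 0`, AM-GM and `h₃² ≤ h₁` give `2 |h₃ t| ≤ t h₁ t / q + q / t`, hence
`∫_x^y |h₃| ≤ (P² (1 + log (y / x)) / q + q log (y / x)) / 2`; letting `q ↓ P` gives the bound.
-/

open MeasureTheory Set Real
open scoped ENNReal

-- Both sides integrate `f t` over the triangle `a < s < t ≤ b`.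
theorem lintegral_Ioc_sub_mul_eq {f : ℝ → ℝ≥0∞} (hf : Measurable f) (a b : ℝ) :
    ∫⁻ t in Ioc a b, ENNReal.ofReal (t - a) * f t = ∫⁻ s in Ioc a b, ∫⁻ t in Ioc s b, f t := by
  set G : ℝ × ℝ → ℝ≥0∞ := {q | q.2 < q.1}.indicator (f ∘ Prod.fst)
  have hG : Measurable G :=
    (hf.comp measurable_fst).indicator (measurableSet_lt measurable_snd measurable_fst)
  have h_inner_s : ∀ t ∈ Ioc a b, ∫⁻ s in Ioc a b, G (t, s) = ENNReal.ofReal (t - a) * f t := by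
    intro t ht
    have h_slice : ∀ s, G (t, s) = (Iio t).indicator (fun _ => f t) s := fun s => by
      by_cases h : s < t <;> simp [G, h]
    simp_rw [h_slice]
    rw [lintegral_indicator measurableSet_Iio, Measure.restrict_restrict measurableSet_Iio,
      setLIntegral_const, show Iio t ∩ Ioc a b = Ioo a t by
        ext s
        exact ⟨fun ⟨hst, has, _⟩ => ⟨has, hst⟩, fun ⟨has, hst⟩ => ⟨hst, has, hst.le.trans ht.2⟩⟩,
      Real.volume_Ioo, mul_comm]
  have h_inner_t : ∀ s ∈ Ioc a b, ∫⁻ t in Ioc a b, G (t, s) = ∫⁻ t in Ioc s b, f t := by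
    intro s hs
    have h_slice : ∀ t, G (t, s) = (Ioi s).indicator f t := fun t => by
      by_cases h : s < t <;> simp [G, h]
    simp_rw [h_slice]
    rw [lintegral_indicator measurableSet_Ioi, Measure.restrict_restrict measurableSet_Ioi,
      inter_comm, Ioc_inter_Ioi, sup_eq_right.2 hs.1.le]
  calc ∫⁻ t in Ioc a b, ENNReal.ofReal (t - a) * f t
      = ∫⁻ t in Ioc a b, ∫⁻ s in Ioc a b, G (t, s) :=
        setLIntegral_congr_fun measurableSet_Ioc fun t ht => (h_inner_s t ht).symm
    _ = ∫⁻ s in Ioc a b, ∫⁻ t in Ioc a b, G (t, s) := lintegral_lintegral_swap hG.aemeasurable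
    _ = ∫⁻ s in Ioc a b, ∫⁻ t in Ioc s b, f t :=
        setLIntegral_congr_fun measurableSet_Ioc h_inner_t

theorem lintegral_Ioc_inv {a b : ℝ} (ha : 0 < a) (hab : a ≤ b) :
    ∫⁻ t in Ioc a b, ENNReal.ofReal t⁻¹ = ENNReal.ofReal (log (b / a)) := by
  have hcont : ContinuousOn (fun t : ℝ => t⁻¹) (Icc a b) :=
    continuousOn_inv₀.mono fun t ht => (ha.trans_le ht.1).ne'
  rw [← ofReal_integral_eq_lintegral_ofReal (hcont.integrableOn_Icc.mono_set Ioc_subset_Icc_self),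
    ← intervalIntegral.integral_of_le hab, integral_inv_of_pos ha (ha.trans_le hab)]
  filter_upwards [ae_restrict_mem measurableSet_Ioc] with t ht
  exact inv_nonneg.2 (ha.trans ht.1).le

theorem lintegral_Ioc_mul_le_of_mul_tail_le {f : ℝ → ℝ≥0∞} (hf : Measurable f) {a b : ℝ}
    (ha : 0 < a) (hab : a ≤ b) {C : ℝ≥0∞}
    (hC : ∀ s, a ≤ s → ENNReal.ofReal s * ∫⁻ t in Ioi s, f t ≤ C) :
    ∫⁻ t in Ioc a b, ENNReal.ofReal t * f t ≤ C * (1 + ENNReal.ofReal (log (b / a))) := by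
  have h_tail : ∀ s, a ≤ s → ∫⁻ t in Ioi s, f t ≤ C * ENNReal.ofReal s⁻¹ := by
    intro s hs
    have hs₀ : 0 < s := ha.trans_le hs
    rw [ENNReal.ofReal_inv_of_pos hs₀, ← div_eq_mul_inv,
      ENNReal.le_div_iff_mul_le (Or.inl (ENNReal.ofReal_pos.2 hs₀).ne')
        (Or.inl ENNReal.ofReal_ne_top), mul_comm]
    exact hC s hs
  calc ∫⁻ t in Ioc a b, ENNReal.ofReal t * f t
      = ∫⁻ t in Ioc a b, (ENNReal.ofReal a * f t + ENNReal.ofReal (t - a) * f t) := by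
        refine setLIntegral_congr_fun measurableSet_Ioc fun t ht => ?_
        rw [← add_mul, ← ENNReal.ofReal_add ha.le (sub_nonneg.2 ht.1.le), add_sub_cancel]
    _ = ENNReal.ofReal a * (∫⁻ t in Ioc a b, f t) + ∫⁻ s in Ioc a b, ∫⁻ t in Ioc s b, f t := by
        rw [lintegral_add_left (hf.const_mul _), lintegral_const_mul _ hf,
          lintegral_Ioc_sub_mul_eq hf]
    _ ≤ ENNReal.ofReal a * (∫⁻ t in Ioi a, f t) + ∫⁻ s in Ioc a b, C * ENNReal.ofReal s⁻¹ := by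
        refine add_le_add (mul_le_mul_right (lintegral_mono_set Ioc_subset_Ioi_self) _) ?_
        exact setLIntegral_mono' measurableSet_Ioc fun s hs =>
          (lintegral_mono_set Ioc_subset_Ioi_self).trans (h_tail s hs.1.le)
    _ ≤ C + C * ENNReal.ofReal (log (b / a)) := by
        rw [lintegral_const_mul _ measurable_inv.ennreal_ofReal, lintegral_Ioc_inv ha hab]
        exact add_le_add_left (hC a le_rfl) _
    _ = C * (1 + ENNReal.ofReal (log (b / a))) := by rw [mul_add, mul_one]

theorem integral_mul_le_of_mul_tail_le {h : ℝ → ℝ} (hmeas : Measurable h) {a b : ℝ}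
    (ha : 0 < a) (hab : a ≤ b) (hint : IntegrableOn h (Ioi a))
    (hnn : 0 ≤ᵐ[volume.restrict (Ioi a)] h) {C : ℝ}
    (hC : ∀ s, a ≤ s → s * ∫ t in Ioi s, h t ≤ C) :
    ∫ t in a..b, t * h t ≤ C * (1 + log (b / a)) := by
  have hL : 0 ≤ log (b / a) := log_nonneg ((one_le_div ha).2 hab)
  have hC₀ : 0 ≤ C :=
    (mul_nonneg ha.le (setIntegral_nonneg_of_ae_restrict hnn)).trans (hC a le_rfl)
  have h_lint := lintegral_Ioc_mul_le_of_mul_tail_le hmeas.ennreal_ofReal ha hab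
    (C := ENNReal.ofReal C) fun s hs => by
      rw [← ofReal_integral_eq_lintegral_ofReal (hint.mono_set (Ioi_subset_Ioi hs))
          (ae_restrict_of_ae_restrict_of_subset (Ioi_subset_Ioi hs) hnn),
        ← ENNReal.ofReal_mul (ha.trans_le hs).le]
      exact ENNReal.ofReal_le_ofReal (hC s hs)
  rw [intervalIntegral.integral_of_le hab,
    integral_eq_lintegral_of_nonneg_ae ?nonneg (by fun_prop)]
  case nonneg =>
    filter_upwards [ae_restrict_mem measurableSet_Ioc,
      ae_restrict_of_ae_restrict_of_subset Ioc_subset_Ioi_self hnn] with t ht hht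
    exact mul_nonneg (ha.trans ht.1).le hht
  refine ENNReal.toReal_le_of_le_ofReal (by positivity) ?_
  calc ∫⁻ t in Ioc a b, ENNReal.ofReal (t * h t)
      = ∫⁻ t in Ioc a b, ENNReal.ofReal t * ENNReal.ofReal (h t) :=
        setLIntegral_congr_fun measurableSet_Ioc fun t ht => ENNReal.ofReal_mul (ha.trans ht.1).le
    _ ≤ ENNReal.ofReal C * (1 + ENNReal.ofReal (log (b / a))) := h_lint
    _ = ENNReal.ofReal (C * (1 + log (b / a))) := by
        rw [ENNReal.ofReal_mul hC₀, ENNReal.ofReal_add zero_le_one hL, ENNReal.ofReal_one]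

theorem abs_le_half_add_of_sq_le {u v t q : ℝ} (ht : 0 < t) (hq : 0 < q) (huv : u ^ 2 ≤ v) :
    |u| ≤ (t * v / q + q * t⁻¹) / 2 := by
  have hform : (t * v / q + q * t⁻¹) / 2 = (t ^ 2 * v + q ^ 2) / (2 * q * t) := by
    field_simp
  rw [hform, le_div_iff₀ (by positivity)]
  nlinarith [sq_nonneg (t * |u| - q), sq_abs u, mul_le_mul_of_nonneg_left huv (sq_nonneg t)]

theorem integral_abs_le_of_sq_le {g h : ℝ → ℝ} {a b q : ℝ} (ha : 0 < a) (hab : a ≤ b) (hq : 0 < q)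
    (hg : IntervalIntegrable g volume a b) (hh : IntervalIntegrable h volume a b)
    (hgh : ∀ᵐ t ∂volume.restrict (Icc a b), g t ^ 2 ≤ h t) :
    ∫ t in a..b, |g t| ≤ ((∫ t in a..b, t * h t) / q + q * log (b / a)) / 2 := by
  have hpos : ∀ t ∈ uIcc a b, 0 < t := fun t ht => ha.trans_le (uIcc_of_le hab ▸ ht).1
  have hmul : IntervalIntegrable (fun t => t * h t) volume a b :=
    hh.continuousOn_mul continuousOn_id
  have hinv : IntervalIntegrable (fun t : ℝ => t⁻¹) volume a b :=
    intervalIntegral.intervalIntegrable_inv (fun t ht => (hpos t ht).ne') continuousOn_id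
  calc ∫ t in a..b, |g t|
      ≤ ∫ t in a..b, (t * h t / q + q * t⁻¹) / 2 := by
        refine intervalIntegral.integral_mono_ae_restrict hab hg.abs
          (((hmul.div_const q).add (hinv.const_mul q)).div_const 2) ?_
        filter_upwards [ae_restrict_mem measurableSet_Icc, hgh] with t ht hght
        exact abs_le_half_add_of_sq_le (hpos t (uIcc_of_le hab ▸ ht)) hq hght
    _ = ((∫ t in a..b, t * h t) / q + q * log (b / a)) / 2 := by
        rw [intervalIntegral.integral_div, intervalIntegral.integral_add (hmul.div_const q)
          (hinv.const_mul q), intervalIntegral.integral_div, intervalIntegral.integral_const_mul,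
          integral_inv_of_pos ha (ha.trans_le hab)]

theorem le_mul_one_add_of_forall_le {I P L : ℝ} (hP : 0 ≤ P) (hL : 0 ≤ L)
    (hI : ∀ q, 0 < q → I ≤ (P ^ 2 * (1 + L) / q + q * L) / 2) : I ≤ P * (1 + L) := by
  refine le_of_forall_gt_imp_ge_of_dense fun c hc => ?_
  set q := c / (1 + L)
  have hPq : P < q := (lt_div_iff₀ (by positivity)).2 hc
  have hq : 0 < q := hP.trans_lt hPq
  calc I ≤ (P ^ 2 * (1 + L) / q + q * L) / 2 := hI q hq
    _ ≤ (q * (1 + L) + q * L) / 2 := by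
        gcongr
        rw [div_le_iff₀ hq, mul_right_comm, ← sq]
        gcongr
    _ ≤ q * (1 + L) := by nlinarith
    _ = c := div_mul_cancel₀ c (by positivity)

theorem le_sq_ciSup_sqrt {ι : Type*} {F : ι → ℝ} (hF : BddAbove (range fun i => √(F i))) (i : ι)
    (hi : 0 ≤ F i) : F i ≤ (⨆ j, √(F j)) ^ 2 := by
  rw [← sq_sqrt hi]
  gcongr
  exact le_ciSup hF i

theorem intervalIntegrable_of_integrableOn_Ioo {f : ℝ → ℝ} {a b c : ℝ} (hca : c ≤ a) (hab : a ≤ b)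
    (hf : IntegrableOn f (Ioo c b)) : IntervalIntegrable f volume a b :=
  (intervalIntegrable_iff_integrableOn_Ioo_of_le hab).2 (hf.mono_set (Ioo_subset_Ioo_left hca))

theorem integral_Ioo_sub_integral_Ioo {f : ℝ → ℝ} {a b c : ℝ} (hca : c ≤ a) (hab : a ≤ b)
    (hf : IntegrableOn f (Ioo c b)) :
    (∫ t in Ioo c b, f t) - ∫ t in Ioo c a, f t = ∫ t in a..b, f t := by
  rw [← integral_Ioc_eq_integral_Ioo, ← integral_Ioc_eq_integral_Ioo,
    ← intervalIntegral.integral_of_le (hca.trans hab), ← intervalIntegral.integral_of_le hca,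
    intervalIntegral.integral_interval_sub_left
      (intervalIntegrable_of_integrableOn_Ioo le_rfl (hca.trans hab) hf)
      (intervalIntegrable_of_integrableOn_Ioo le_rfl hca (hf.mono_set (Ioo_subset_Ioo_right hab)))]

theorem m3_increment_bound_general
    (h₁ h₃ : ℝ → ℝ) (hmeas₁ : Measurable h₁)
    (hbd : ∀ᵐ t ∂(volume.restrict (Ioi (0:ℝ))), 0 ≤ h₁ t ∧ h₁ t ≤ 1 ∧ h₃ t ^ 2 ≤ h₁ t)
    (hint₁ : IntegrableOn h₁ (Ioi (0:ℝ)))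
    (hint₃ : ∀ T : ℝ, IntegrableOn h₃ (Ioo 0 T))
    (m₃ : ℝ → ℝ) (hm₃ : ∀ t, m₃ t = ∫ s in Ioo 0 t, h₃ s)
    (p : ℝ → ℝ)
    (hp : ∀ t, p t = ⨆ x : {x : ℝ // t ≤ x}, Real.sqrt (x.1 * ∫ s in Ioi x.1, h₁ s))
    (hpfin : ∀ t : ℝ, 0 < t →
      BddAbove (Set.range fun x : {x : ℝ // t ≤ x} =>
        Real.sqrt (x.1 * ∫ s in Ioi x.1, h₁ s))) :
    ∀ x y : ℝ, 0 < x → x < y → |m₃ y - m₃ x| ≤ p x * (1 + Real.log (y / x)) := by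
  intro x y hx hxy
  have hIoi : Ioi x ⊆ Ioi 0 := Ioi_subset_Ioi hx.le
  have h₁_nonneg : 0 ≤ᵐ[volume.restrict (Ioi x)] h₁ :=
    ae_restrict_of_ae_restrict_of_subset hIoi (hbd.mono fun _ ht => ht.1)
  have h_tail : ∀ s, x ≤ s → s * ∫ t in Ioi s, h₁ t ≤ p x ^ 2 := fun s hs => by
    rw [hp x]
    exact le_sq_ciSup_sqrt (hpfin x hx) ⟨s, hs⟩ <| mul_nonneg (hx.le.trans hs) <|
      setIntegral_nonneg_of_ae_restrict <|
        ae_restrict_of_ae_restrict_of_subset (Ioi_subset_Ioi hs) h₁_nonneg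
  have hp_nonneg : 0 ≤ p x := hp x ▸ (sqrt_nonneg _).trans (le_ciSup (hpfin x hx) ⟨x, le_rfl⟩)
  have h_moment : ∫ t in x..y, t * h₁ t ≤ p x ^ 2 * (1 + log (y / x)) :=
    integral_mul_le_of_mul_tail_le hmeas₁ hx hxy.le (hint₁.mono_set hIoi) h₁_nonneg h_tail
  have h_sq : ∀ᵐ t ∂volume.restrict (Icc x y), h₃ t ^ 2 ≤ h₁ t :=
    ae_restrict_of_ae_restrict_of_subset (fun t ht => hx.trans_le ht.1)
      (hbd.mono fun _ ht => ht.2.2)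
  rw [hm₃, hm₃, integral_Ioo_sub_integral_Ioo hx.le hxy.le (hint₃ y)]
  refine (intervalIntegral.abs_integral_le_integral_abs hxy.le).trans
    (le_mul_one_add_of_forall_le hp_nonneg (log_nonneg ((one_le_div hx).2 hxy.le)) fun q hq => ?_)
  refine (integral_abs_le_of_sq_le hx hxy.le hq
    (intervalIntegrable_of_integrableOn_Ioo hx.le hxy.le (hint₃ y))
    (intervalIntegrable_of_integrableOn_Ioo hx.le hxy.le (hint₁.mono_set Ioo_subset_Ioi_self))
    h_sq).trans ?_
  gcongr

theorem m3_increment_bound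
    (h₁ h₃ : ℝ → ℝ) (hmeas₁ : Measurable h₁) (hmeas₃ : Measurable h₃)
    (hbd : ∀ᵐ t ∂(volume.restrict (Ioi (0:ℝ))), 0 ≤ h₁ t ∧ h₁ t ≤ 1 ∧ h₃ t ^ 2 ≤ h₁ t)
    (hint₁ : IntegrableOn h₁ (Ioi (0:ℝ)))
    (hint₃ : ∀ T : ℝ, IntegrableOn h₃ (Ioo 0 T))
    (m₃ : ℝ → ℝ) (hm₃ : ∀ t, m₃ t = ∫ s in Ioo 0 t, h₃ s)
    (p : ℝ → ℝ)
    (hp : ∀ t, p t = ⨆ x : {x : ℝ // t ≤ x}, Real.sqrt (x.1 * ∫ s in Ioi x.1, h₁ s))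
    (hpfin : ∀ t : ℝ, 0 < t →
      BddAbove (Set.range fun x : {x : ℝ // t ≤ x} =>
        Real.sqrt (x.1 * ∫ s in Ioi x.1, h₁ s))) :
    ∀ x y : ℝ, 0 < x → x < y → |m₃ y - m₃ x| ≤ p x * (1 + Real.log (y / x)) :=
  m3_increment_bound_general h₁ h₃ hmeas₁ hbd hint₁ hint₃ m₃ hm₃ p hp hpfin
end

section
/- Define F(t,λ) = ∫_t^∞ h₁(s) e^{2λ m₃(s)} ds · ∫_0^t h₂(s) e^{−2λ m₃(s)} ds for measurable nonnegative h₁, h₂ and m₃(s) = ∫_0^s h₃. Then for every finite interval [μ₁, μ₂] and every λ ∈ [μ₁, μ₂]: F(t,λ) ≤ max{F(t,μ₁), F(t,μ₂), F(t,μ₁)^{1/2}, F(t,μ₂)^{1/2}, F(t,μ₁)·F(t,μ₂)}. -/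
/-! Hölder's inequality makes each factor of `F t λ` log-convex in `λ`: writing
`λ = p μ₁ + q μ₂` with `p + q = 1`, the weight `e^{2λ m₃}` is the geometric mean
`(e^{2μ₁ m₃})^p (e^{2μ₂ m₃})^q`, so `F t λ ≤ (F t μ₁)^p (F t μ₂)^q ≤ max (F t μ₁) (F t μ₂)`. -/

open MeasureTheory Set Real ENNReal

lemma ENNReal.rpow_mul_rpow_le_max (A B : ℝ≥0∞) {p q : ℝ} (hp : 0 ≤ p) (hq : 0 ≤ q)
    (hpq : p + q = 1) : A ^ p * B ^ q ≤ max A B :=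
  calc A ^ p * B ^ q ≤ max A B ^ p * max A B ^ q := by gcongr <;> simp
    _ = max A B := by rw [← ENNReal.rpow_add_of_nonneg _ _ hp hq, hpq, ENNReal.rpow_one]

lemma ENNReal.ofReal_mul_exp_add_eq_rpow_mul_rpow (a x y : ℝ) {p q : ℝ} (hp : 0 ≤ p) (hq : 0 ≤ q)
    (hpq : p + q = 1) :
    ENNReal.ofReal (a * exp (p * x + q * y)) =
      ENNReal.ofReal (a * exp x) ^ p * ENNReal.ofReal (a * exp y) ^ q := by
  have hsplit : ENNReal.ofReal a = ENNReal.ofReal a ^ p * ENNReal.ofReal a ^ q := by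
    rw [← ENNReal.rpow_add_of_nonneg _ _ hp hq, hpq, ENNReal.rpow_one]
  rw [ENNReal.ofReal_mul' (exp_nonneg _), ENNReal.ofReal_mul' (exp_nonneg _),
    ENNReal.ofReal_mul' (exp_nonneg _), ENNReal.mul_rpow_of_nonneg _ _ hp,
    ENNReal.mul_rpow_of_nonneg _ _ hq, ENNReal.ofReal_rpow_of_nonneg (exp_nonneg _) hp,
    ENNReal.ofReal_rpow_of_nonneg (exp_nonneg _) hq, ← exp_mul, ← exp_mul, exp_add,
    ENNReal.ofReal_mul (exp_nonneg _), mul_comm x, mul_comm y, mul_mul_mul_comm, ← hsplit]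

lemma lintegral_ofReal_mul_exp_le_rpow_mul_rpow {α : Type*} [MeasurableSpace α] {μ : Measure α}
    {f g : α → ℝ} (hf : Measurable f) (hg : Measurable g) {p q : ℝ} (hp : 0 ≤ p) (hq : 0 ≤ q)
    (hpq : p + q = 1) (x y : ℝ) :
    ∫⁻ s, ENNReal.ofReal (f s * exp ((p * x + q * y) * g s)) ∂μ ≤
      (∫⁻ s, ENNReal.ofReal (f s * exp (x * g s)) ∂μ) ^ p *
        (∫⁻ s, ENNReal.ofReal (f s * exp (y * g s)) ∂μ) ^ q := by
  have hweight (z : ℝ) : Measurable fun s => ENNReal.ofReal (f s * exp (z * g s)) :=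
    (hf.mul (hg.const_mul z).exp).ennreal_ofReal
  calc ∫⁻ s, ENNReal.ofReal (f s * exp ((p * x + q * y) * g s)) ∂μ
      = ∫⁻ s, ENNReal.ofReal (f s * exp (x * g s)) ^ p *
          ENNReal.ofReal (f s * exp (y * g s)) ^ q ∂μ := by
        refine lintegral_congr fun s => ?_
        rw [← ENNReal.ofReal_mul_exp_add_eq_rpow_mul_rpow _ _ _ hp hq hpq]
        ring_nf
    _ ≤ _ := ENNReal.lintegral_mul_norm_pow_le (hweight x).aemeasurable
        (hweight y).aemeasurable hp hq hpq

lemma measurable_setIntegral_Ioo_zero {f : ℝ → ℝ} (hf : Measurable f) :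
    Measurable fun s => ∫ u in Ioo 0 s, f u := by
  have hset : MeasurableSet {z : ℝ × ℝ | z.2 ∈ Ioo 0 z.1} :=
    (measurableSet_lt measurable_const measurable_snd).inter
      (measurableSet_lt measurable_snd measurable_fst)
  have hprod : StronglyMeasurable fun z : ℝ × ℝ => (Ioo 0 z.1).indicator f z.2 :=
    ((hf.comp measurable_snd).indicator hset).stronglyMeasurable
  simpa only [integral_indicator measurableSet_Ioo] using
    hprod.integral_prod_right'.measurable

theorem F_max_interpolation_bound_general
    (h₁ h₂ h₃ : ℝ → ℝ) (hmeas₁ : Measurable h₁) (hmeas₂ : Measurable h₂)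
    (hmeas₃ : Measurable h₃)
    (m₃ : ℝ → ℝ) (hm₃ : ∀ s, m₃ s = ∫ u in Ioo 0 s, h₃ u)
    (F : ℝ → ℝ → ℝ≥0∞)
    (hF : ∀ t lam, F t lam =
      (∫⁻ s in Ioi t, ENNReal.ofReal (h₁ s * Real.exp (2 * lam * m₃ s))) *
      (∫⁻ s in Ioo 0 t, ENNReal.ofReal (h₂ s * Real.exp (-(2 * lam * m₃ s))))) :
    ∀ μ₁ μ₂ : ℝ, μ₁ ≤ μ₂ → ∀ lam ∈ Icc μ₁ μ₂, ∀ t : ℝ,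
      F t lam ≤ max (max (max (max (F t μ₁) (F t μ₂)) ((F t μ₁) ^ (1/2 : ℝ)))
        ((F t μ₂) ^ (1/2 : ℝ))) (F t μ₁ * F t μ₂) := by
  intro μ₁ μ₂ hμ lam hlam t
  obtain ⟨p, q, hp, hq, hpq, rfl⟩ := (segment_eq_Icc hμ).symm ▸ hlam
  have hm : Measurable m₃ := (funext hm₃ : m₃ = _) ▸ measurable_setIntegral_Ioo_zero hmeas₃
  have hF' (lam : ℝ) : F t lam =
      (∫⁻ s in Ioi t, ENNReal.ofReal (h₁ s * exp (lam * (2 * m₃ s)))) *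
      (∫⁻ s in Ioo 0 t, ENNReal.ofReal (h₂ s * exp (lam * (-2 * m₃ s)))) := by
    rw [hF]; ring_nf
  calc F t (p • μ₁ + q • μ₂) ≤ F t μ₁ ^ p * F t μ₂ ^ q := by
        rw [hF', hF', hF', ENNReal.mul_rpow_of_nonneg _ _ hp, ENNReal.mul_rpow_of_nonneg _ _ hq,
          mul_mul_mul_comm]
        exact mul_le_mul'
          (lintegral_ofReal_mul_exp_le_rpow_mul_rpow hmeas₁ (hm.const_mul 2) hp hq hpq _ _)
          (lintegral_ofReal_mul_exp_le_rpow_mul_rpow hmeas₂ (hm.const_mul (-2)) hp hq hpq _ _)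
    _ ≤ max (F t μ₁) (F t μ₂) := ENNReal.rpow_mul_rpow_le_max _ _ hp hq hpq
    _ ≤ _ := le_max_of_le_left (le_max_of_le_left (le_max_of_le_left le_rfl))

theorem F_max_interpolation_bound
    (h₁ h₂ h₃ : ℝ → ℝ) (hmeas₁ : Measurable h₁) (hmeas₂ : Measurable h₂)
    (hmeas₃ : Measurable h₃)
    (hnn₁ : ∀ s, 0 ≤ h₁ s) (hnn₂ : ∀ s, 0 ≤ h₂ s)
    (hint₃ : ∀ T : ℝ, IntegrableOn h₃ (Ioo 0 T))
    (m₃ : ℝ → ℝ) (hm₃ : ∀ s, m₃ s = ∫ u in Ioo 0 s, h₃ u)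
    (F : ℝ → ℝ → ℝ≥0∞)
    (hF : ∀ t lam, F t lam =
      (∫⁻ s in Ioi t, ENNReal.ofReal (h₁ s * Real.exp (2 * lam * m₃ s))) *
      (∫⁻ s in Ioo 0 t, ENNReal.ofReal (h₂ s * Real.exp (-(2 * lam * m₃ s))))) :
    ∀ μ₁ μ₂ : ℝ, μ₁ ≤ μ₂ → ∀ lam ∈ Icc μ₁ μ₂, ∀ t : ℝ,
      F t lam ≤ max (max (max (max (F t μ₁) (F t μ₂)) ((F t μ₁) ^ (1/2 : ℝ)))
        ((F t μ₂) ^ (1/2 : ℝ))) (F t μ₁ * F t μ₂) :=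
  F_max_interpolation_bound_general h₁ h₂ h₃ hmeas₁ hmeas₂ hmeas₃ m₃ hm₃ F hF
end

section
/- Let φ : [0,1) → (0,∞) be continuous and regularly varying at 1 with index ρ > 0. Set κ ≡ 1 on [0,1), c_n = 1 − 2^{-n}, and ω_n = 2^{-n/2} (∫_{c_{n-1}}^{c_n} φ(s)² ds)^{1/2}. Then there exist constants c, C > 0 such that c · 2^{-n} φ(1 − 2^{-n}) ≤ ω_n ≤ C · 2^{-n} φ(1 − 2^{-n}) for all sufficiently large n. -/
open Filter Topology Set MeasureTheory

open scoped Pointwise ENNReal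

/-!
Put `ψ x = φ ((x - 1) / x)`. The points of the `n`-th dyadic block are `(k x - 1) / (k x)` with
`x = 2 ^ n` and `k ∈ [1/2, 1]`, so it suffices that `ψ (k x)` and `ψ x` agree up to a fixed factor,
uniformly in `k ∈ [1/2, 1]`, for all large `x`. Regular variation gives such a factor for each `k`
separately. By continuity, the sets of `k ∈ [1/4, 1]` that admit the factor `m + 1` beyond `m + 4`
are closed and exhaust `[1/4, 1]`, so one of them, `E`, has measure `> 7/10`. For `k ∈ [1/2, 1]`
the sets `k • E` and `E` lie in `[1/8, 1]` and have total measure `> 7/8`, so they meet: `k v = u`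
with `u, v ∈ E`, and then `ψ (k x) = ψ (u (x / v))` and `ψ x = ψ (v (x / v))` are both comparable
to `ψ (x / v)` (a Steinhaus-type argument).
-/

def WithinFactor (C a b : ℝ) : Prop := ‖a‖ ≤ C * ‖b‖ ∧ ‖b‖ ≤ C * ‖a‖

namespace WithinFactor

variable {C D a b c : ℝ}

theorem symm (h : WithinFactor C a b) : WithinFactor C b a := And.symm h

theorem mono (h : WithinFactor C a b) (hCD : C ≤ D) : WithinFactor D a b :=
  ⟨h.1.trans (by gcongr), h.2.trans (by gcongr)⟩

theorem trans (hab : WithinFactor C a b) (hbc : WithinFactor D b c) (hC : 0 ≤ C) (hD : 0 ≤ D) :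
    WithinFactor (C * D) a c :=
  ⟨hab.1.trans (by rw [mul_assoc]; gcongr; exact hbc.1),
    hbc.2.trans (by rw [mul_comm C, mul_assoc]; gcongr; exact hab.2)⟩

end WithinFactor

theorem Asymptotics.IsTheta.exists_withinFactor {f g : ℝ → ℝ} (h : f =Θ[atTop] g) :
    ∃ C X, ∀ x ≥ X, WithinFactor C (f x) (g x) := by
  obtain ⟨c₁, hc₁⟩ := h.1.bound
  obtain ⟨c₂, hc₂⟩ := h.2.bound
  obtain ⟨X, hX⟩ := eventually_atTop.1 (hc₁.and hc₂)
  refine ⟨max c₁ c₂, X, fun x hx => ⟨(hX x hx).1.trans ?_, (hX x hx).2.trans ?_⟩⟩ <;> gcongr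
  exacts [le_max_left _ _, le_max_right _ _]

theorem nonempty_smul_inter_of_volume_gt {E : Set ℝ} (hE : MeasurableSet E)
    (hEsub : E ⊆ Icc (1/4) 1) (hvol : ENNReal.ofReal (7/10) < volume E) {k : ℝ}
    (hk : k ∈ Icc (1/2 : ℝ) 1) : (k • E ∩ E).Nonempty := by
  refine nonempty_inter_of_measure_lt_add volume hE (u := Icc (1/8) 1) ?_
    (hEsub.trans (Icc_subset_Icc (by norm_num) le_rfl)) ?_
  · rintro _ ⟨v, hv, rfl⟩
    have hv' := hEsub hv
    simp only [smul_eq_mul, mem_Icc]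
    constructor <;> nlinarith [hk.1, hk.2, hv'.1, hv'.2]
  · rw [Measure.addHaar_smul, Module.finrank_self, pow_one, abs_of_nonneg (by linarith [hk.1]),
      Real.volume_Icc]
    calc ENNReal.ofReal (1 - 1/8)
        < ENNReal.ofReal (1/2) * ENNReal.ofReal (7/10) + ENNReal.ofReal (7/10) := by
          rw [← ENNReal.ofReal_mul (by norm_num), ← ENNReal.ofReal_add (by norm_num) (by norm_num),
            ENNReal.ofReal_lt_ofReal_iff (by norm_num)]
          norm_num
      _ ≤ ENNReal.ofReal k * volume E + volume E := by gcongr; exact hk.1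

section

variable {ψ : ℝ → ℝ}

theorem continuousOn_comp_mul_Icc (hψ : ContinuousOn ψ (Ici 1)) {x : ℝ} (hx : 4 ≤ x) :
    ContinuousOn (fun k => ψ (k * x)) (Icc (1/4) 1) :=
  hψ.comp (continuousOn_id.mul continuousOn_const) fun k hk => by
    simp only [mem_Ici]; nlinarith [hk.1]

theorem isClosed_setOf_forall_withinFactor (hψ : ContinuousOn ψ (Ici 1)) (C : ℝ) {X : ℝ}
    (hX : 4 ≤ X) :
    IsClosed {k ∈ Icc (1/4 : ℝ) 1 | ∀ x ≥ X, WithinFactor C (ψ (k * x)) (ψ x)} := by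
  have hclosed : ∀ x ∈ Ici X, IsClosed (Icc (1/4 : ℝ) 1 ∩
      (fun k => ψ (k * x)) ⁻¹' {r | ‖r‖ ≤ C * ‖ψ x‖ ∧ ‖ψ x‖ ≤ C * ‖r‖}) := fun x hx =>
    (continuousOn_comp_mul_Icc hψ (hX.trans hx)).preimage_isClosed_of_isClosed isClosed_Icc
      ((isClosed_le continuous_norm continuous_const).inter
        (isClosed_le continuous_const (continuous_const.mul continuous_norm)))
  convert isClosed_Icc.inter (isClosed_biInter hclosed) using 1
  ext k
  simp only [mem_ofPred_eq, mem_inter_iff, mem_iInter, mem_preimage, mem_Ici, WithinFactor]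
  constructor
  · rintro ⟨hk, h⟩; exact ⟨hk, fun x hx => ⟨hk, h x hx⟩⟩
  · rintro ⟨hk, h⟩; exact ⟨hk, fun x hx => (h x hx).2⟩

theorem exists_large_set_withinFactor (hψ : ContinuousOn ψ (Ici 1))
    (h : ∀ k ∈ Icc (1/4 : ℝ) 1, ψ =Θ[atTop] fun x => ψ (k * x)) {r : ℝ≥0∞}
    (hr : r < volume (Icc (1/4 : ℝ) 1)) :
    ∃ E ⊆ Icc (1/4 : ℝ) 1, MeasurableSet E ∧ r < volume E ∧
      ∃ C > 0, ∃ X, ∀ k ∈ E, ∀ x ≥ X, WithinFactor C (ψ (k * x)) (ψ x) := by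
  set A : ℕ → Set ℝ := fun m =>
    {k ∈ Icc (1/4 : ℝ) 1 | ∀ x ≥ (m : ℝ) + 4, WithinFactor (m + 1) (ψ (k * x)) (ψ x)}
  have hA_mono : Monotone A := by
    intro m n hmn k ⟨hk, hkm⟩
    have hmn' : (m : ℝ) ≤ n := by exact_mod_cast hmn
    exact ⟨hk, fun x hx => (hkm x (by linarith)).mono (by linarith)⟩
  have hA_iUnion : ⋃ m, A m = Icc (1/4) 1 := by
    refine Subset.antisymm (iUnion_subset fun m => sep_subset _ _) fun k hk => ?_
    obtain ⟨C, X, hCX⟩ := (h k hk).symm.exists_withinFactor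
    have hC := Nat.le_ceil (max C X)
    refine mem_iUnion.2 ⟨⌈max C X⌉₊, hk, fun x hx => (hCX x ?_).mono ?_⟩
    · linarith [le_max_right C X]
    · linarith [le_max_left C X]
  obtain ⟨m, hm⟩ := ((tendsto_measure_iUnion_atTop hA_mono).eventually
    (eventually_gt_nhds (hA_iUnion ▸ hr))).exists
  exact ⟨A m, sep_subset _ _,
    (isClosed_setOf_forall_withinFactor hψ _ (le_add_of_nonneg_left m.cast_nonneg)).measurableSet,
    hm, m + 1, by positivity, m + 4, fun k hk => hk.2⟩

theorem exists_withinFactor_uniform (hψ : ContinuousOn ψ (Ici 1))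
    (h : ∀ k ∈ Icc (1/4 : ℝ) 1, ψ =Θ[atTop] fun x => ψ (k * x)) :
    ∃ C > 0, ∃ X, ∀ x ≥ X, ∀ k ∈ Icc (1/2 : ℝ) 1, WithinFactor C (ψ (k * x)) (ψ x) := by
  obtain ⟨E, hEsub, hE, hvol, C, hC, X, hX⟩ := exists_large_set_withinFactor hψ h
    (r := ENNReal.ofReal (7/10))
    (by rw [Real.volume_Icc]; exact ENNReal.ofReal_lt_ofReal_iff'.2 (by norm_num))
  refine ⟨C * C, by positivity, max X 0, fun x hx k hk => ?_⟩
  obtain ⟨_, ⟨⟨v, hv, rfl⟩, hkv⟩⟩ := nonempty_smul_inter_of_volume_gt hE hEsub hvol hk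
  have hv' := hEsub hv
  have hv0 : 0 < v := by linarith [hv'.1]
  have hy : X ≤ x / v := by
    rw [le_div_iff₀ hv0]
    nlinarith [le_max_left X 0, le_max_right X 0, hv'.2]
  have h₁ : WithinFactor C (ψ (k * x)) (ψ (x / v)) := by
    simpa only [smul_eq_mul, mul_assoc, mul_div_cancel₀ _ hv0.ne'] using hX _ hkv _ hy
  have h₂ : WithinFactor C (ψ x) (ψ (x / v)) := by
    simpa only [mul_div_cancel₀ _ hv0.ne'] using hX _ hv _ hy
  exact h₁.trans h₂.symm hC.le hC.le

end

theorem mul_le_sqrt_mul_sqrt_setIntegral_sq {f : ℝ → ℝ} {a b m M : ℝ} (hab : a < b)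
    (hf : IntegrableOn (fun s => f s ^ 2) (Ioo a b)) (hm : 0 ≤ m)
    (hbd : ∀ s ∈ Ioo a b, m ≤ |f s| ∧ |f s| ≤ M) :
    (b - a) * m ≤ √(b - a) * √(∫ s in Ioo a b, f s ^ 2) ∧
      √(b - a) * √(∫ s in Ioo a b, f s ^ 2) ≤ (b - a) * M := by
  have hvol : volume (Ioo a b) ≠ ∞ := measure_Ioo_lt_top.ne
  have hvol_real : volume.real (Ioo a b) = b - a := Real.volume_real_Ioo_of_le hab.le
  obtain ⟨c, hc⟩ := nonempty_Ioo.2 hab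
  have hM : 0 ≤ M := hm.trans ((hbd c hc).1.trans (hbd c hc).2)
  have hlower : m ^ 2 * (b - a) ≤ ∫ s in Ioo a b, f s ^ 2 := by
    rw [← hvol_real]
    refine setIntegral_ge_of_const_le_real measurableSet_Ioo hvol (fun s hs => ?_) hf
    rw [← sq_abs (f s)]
    exact pow_le_pow_left₀ hm (hbd s hs).1 2
  have hupper : ∫ s in Ioo a b, f s ^ 2 ≤ M ^ 2 * (b - a) := by
    calc ∫ s in Ioo a b, f s ^ 2 ≤ ∫ _ in Ioo a b, M ^ 2 :=
          setIntegral_mono_on hf (integrableOn_const hvol) measurableSet_Ioo fun s hs => by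
            rw [← sq_abs (f s)]
            exact pow_le_pow_left₀ (abs_nonneg _) (hbd s hs).2 2
      _ = M ^ 2 * (b - a) := by rw [setIntegral_const, hvol_real, smul_eq_mul, mul_comm]
  have hba : 0 ≤ b - a := sub_nonneg.2 hab.le
  rw [← Real.sqrt_mul hba]
  constructor
  · rw [Real.le_sqrt (by positivity) (by positivity)]
    nlinarith
  · rw [Real.sqrt_le_left (by positivity)]
    nlinarith

theorem exists_mem_Icc_sub_one_div_eq {n : ℕ} {s : ℝ}
    (hs : s ∈ Icc (1 - (1/2 : ℝ) ^ n) (1 - (1/2) ^ (n + 1))) :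
    ∃ k ∈ Icc (1/2 : ℝ) 1, (k * 2 ^ (n + 1) - 1) / (k * 2 ^ (n + 1)) = s := by
  have h2 : (0 : ℝ) < 2 ^ (n + 1) := by positivity
  have hlow : 1 ≤ (1 - s) * 2 ^ (n + 1) := by
    have : (1/2 : ℝ) ^ (n + 1) * 2 ^ (n + 1) = 1 := by rw [← mul_pow]; norm_num
    nlinarith [hs.2]
  have hup : (1 - s) * 2 ^ (n + 1) ≤ 2 := by
    have : (1/2 : ℝ) ^ n * 2 ^ (n + 1) = 2 := by rw [pow_succ, ← mul_assoc, ← mul_pow]; norm_num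
    nlinarith [hs.1]
  refine ⟨((1 - s) * 2 ^ (n + 1))⁻¹, ⟨?_, inv_le_one_of_one_le₀ hlow⟩, ?_⟩
  · rw [one_div]; exact inv_anti₀ (by positivity) hup
  · have hs1 : 1 - s ≠ 0 := by nlinarith
    field_simp
    ring

theorem Icc_dyadic_subset_Ico (n : ℕ) :
    Icc (1 - (1/2 : ℝ) ^ n) (1 - (1/2) ^ (n + 1)) ⊆ Ico 0 1 := fun s hs =>
  ⟨by linarith [hs.1, pow_le_one₀ (n := n) (by norm_num : (0 : ℝ) ≤ 1/2) (by norm_num)],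
    by linarith [hs.2, pow_pos (by norm_num : (0 : ℝ) < 1/2) (n + 1)]⟩

theorem ContinuousOn.comp_sub_one_div {φ : ℝ → ℝ} (hφ : ContinuousOn φ (Ico 0 1)) :
    ContinuousOn (fun x => φ ((x - 1) / x)) (Ici 1) := by
  have hpos : ∀ x ∈ Ici (1 : ℝ), 0 < x := fun x hx => zero_lt_one.trans_le hx
  refine hφ.comp ((continuousOn_id.sub continuousOn_const).div continuousOn_id
    fun x hx => (hpos x hx).ne') fun x hx => ?_
  exact ⟨div_nonneg (sub_nonneg.2 hx) (hpos x hx).le, (div_lt_one (hpos x hx)).2 (by linarith)⟩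

theorem omega_n_asymp_for_regularly_varying_general
    (φ : ℝ → ℝ) (ρ : ℝ)
    (hcont : ContinuousOn φ (Ico (0:ℝ) 1))
    (hpos : ∀ t ∈ Ico (0:ℝ) 1, 0 < φ t)
    (hreg : ∀ k : ℝ, 0 < k →
      Tendsto (fun x : ℝ => φ ((k * x - 1) / (k * x)) / φ ((x - 1) / x))
        atTop (𝓝 (k ^ ρ)))
    (ω : ℕ → ℝ)
    (hω : ∀ n : ℕ, ω n = ((1/2 : ℝ) ^ n) ^ (1/2 : ℝ) *
      Real.sqrt (∫ s in Ioo (1 - (1/2 : ℝ) ^ (n - 1)) (1 - (1/2 : ℝ) ^ n), φ s ^ 2)) :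
    ∃ c C : ℝ, 0 < c ∧ 0 < C ∧ ∃ N : ℕ, ∀ n : ℕ, N ≤ n →
      c * ((1/2 : ℝ) ^ n * φ (1 - (1/2 : ℝ) ^ n)) ≤ ω n ∧
      ω n ≤ C * ((1/2 : ℝ) ^ n * φ (1 - (1/2 : ℝ) ^ n)) := by
  obtain ⟨C, hC, X, hX⟩ := exists_withinFactor_uniform hcont.comp_sub_one_div fun k hk =>
    have hk0 : 0 < k := by linarith [hk.1]
    Asymptotics.isTheta_of_div_tendsto_nhds_ne_zero (hreg k hk0) (Real.rpow_pos_of_pos hk0 ρ).ne'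
  obtain ⟨N, hN⟩ := pow_unbounded_of_one_lt X one_lt_two
  refine ⟨C⁻¹, C, inv_pos.2 hC, hC, N + 1, fun n' hn' => ?_⟩
  obtain ⟨n, rfl⟩ : ∃ n, n' = n + 1 := ⟨n' - 1, by omega⟩
  set c := 1 - (1/2 : ℝ) ^ (n + 1)
  have hlen : c - (1 - (1/2 : ℝ) ^ n) = (1/2) ^ (n + 1) := by ring
  have hlt : 1 - (1/2 : ℝ) ^ n < c := sub_pos.1 (hlen ▸ by positivity)
  have hφc : 0 < φ c := hpos c (Icc_dyadic_subset_Ico n ⟨hlt.le, le_rfl⟩)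
  have hblock : ∀ s ∈ Ioo (1 - (1/2 : ℝ) ^ n) c, C⁻¹ * φ c ≤ |φ s| ∧ |φ s| ≤ C * φ c := by
    intro s hs
    obtain ⟨k, hk, rfl⟩ := exists_mem_Icc_sub_one_div_eq (Ioo_subset_Icc_self hs)
    have hx : X ≤ 2 ^ (n + 1) := hN.le.trans (pow_le_pow_right₀ one_le_two (by omega))
    have hc : ((2 : ℝ) ^ (n + 1) - 1) / 2 ^ (n + 1) = c := by
      rw [sub_div, div_self (by positivity), ← one_div_pow]
    obtain ⟨h₁, h₂⟩ := hX _ hx k hk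
    rw [hc, Real.norm_eq_abs, Real.norm_eq_abs, abs_of_pos hφc] at h₁ h₂
    exact ⟨(inv_mul_le_iff₀ hC).2 h₂, h₁⟩
  have hint := mul_le_sqrt_mul_sqrt_setIntegral_sq hlt
    (((hcont.mono (Icc_dyadic_subset_Ico n)).pow 2).integrableOn_Icc.mono_set Ioo_subset_Icc_self)
    (by positivity) hblock
  rw [hlen] at hint
  rw [hω, Nat.add_sub_cancel, ← Real.sqrt_eq_rpow, mul_left_comm, mul_left_comm C]
  exact hint

theorem omega_n_asymp_for_regularly_varying
    (φ : ℝ → ℝ) (ρ : ℝ) (hρ : 0 < ρ)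
    (hcont : ContinuousOn φ (Ico (0:ℝ) 1))
    (hpos : ∀ t ∈ Ico (0:ℝ) 1, 0 < φ t)
    (hreg : ∀ k : ℝ, 0 < k →
      Tendsto (fun x : ℝ => φ ((k * x - 1) / (k * x)) / φ ((x - 1) / x))
        atTop (𝓝 (k ^ ρ)))
    (ω : ℕ → ℝ)
    (hω : ∀ n : ℕ, ω n = ((1/2 : ℝ) ^ n) ^ (1/2 : ℝ) *
      Real.sqrt (∫ s in Ioo (1 - (1/2 : ℝ) ^ (n - 1)) (1 - (1/2 : ℝ) ^ n), φ s ^ 2)) :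
    ∃ c C : ℝ, 0 < c ∧ 0 < C ∧ ∃ N : ℕ, ∀ n : ℕ, N ≤ n →
      c * ((1/2 : ℝ) ^ n * φ (1 - (1/2 : ℝ) ^ n)) ≤ ω n ∧
      ω n ≤ C * ((1/2 : ℝ) ^ n * φ (1 - (1/2 : ℝ) ^ n)) :=
  omega_n_asymp_for_regularly_varying_general φ ρ hcont hpos hreg ω hω
end

section
/- Let κ, φ : (a,b) → ℂ be measurable with κ ∈ L², c_n the dyadic points with ‖1_{(c_n,b)}κ‖² = 2^{-n}‖κ‖², J_n = (c_{n-1}, c_n), and Ω(t) = ‖1_{(t,b)}κ‖·‖1_{(a,t)}φ‖, ω_n = ‖1_{J_n}κ‖·‖1_{J_n}φ‖. Then for every t ∈ J_n with n ≥ 2: Ω(t) ≥ ω_{n-1}/2. -/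
/-!
On `J_{n-1} = (c_{n-2}, c_{n-1})` the mass of `|κ|²` is at most the tail mass beyond `c_{n-2}`,
which is `2^{-(n-2)}‖κ‖² = 4 · 2^{-n}‖κ‖²`, i.e. four times the tail mass beyond `c_n`, and for
`t ∈ J_n` the tail beyond `t` contains the tail beyond `c_n`. On the other side `J_{n-1} ⊆ (a, t)`,
so the `φ`-mass of `J_{n-1}` is at most that of `(a, t)`. Taking square roots gives `ω_{n-1} ≤ 2 Ω(t)`.
-/

open MeasureTheory Set

lemma setIntegral_le_of_subset {α : Type*} [MeasurableSpace α] {μ : Measure α} {g : α → ℝ}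
    {s t : Set α} (hg : ∀ x, 0 ≤ g x) (hint : IntegrableOn g t μ) (hst : s ⊆ t) :
    ∫ x in s, g x ∂μ ≤ ∫ x in t, g x ∂μ :=
  setIntegral_mono_set hint (ae_of_all _ hg) hst.eventuallyLE

lemma setIntegral_dyadic_cell_le_four_mul_tail {α : Type*} [LinearOrder α] [MeasurableSpace α]
    {μ : Measure α} {g : α → ℝ} {a b t : α} {c : ℕ → α}
    (hg : ∀ x, 0 ≤ g x) (hint : IntegrableOn g (Ioo a b) μ)
    (hc0 : c 0 = a) (hc : Monotone c) (hcb : ∀ n, c n ≤ b)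
    (htail : ∀ n, ∫ x in Ioo (c n) b, g x ∂μ = (1 / 2 : ℝ) ^ n * ∫ x in Ioo a b, g x ∂μ)
    (m : ℕ) (hat : a ≤ t) (htc : t ≤ c (m + 2)) :
    ∫ x in Ioo (c m) (c (m + 1)), g x ∂μ ≤ 4 * ∫ x in Ioo t b, g x ∂μ := by
  have hac : a ≤ c m := hc0 ▸ hc (Nat.zero_le m)
  have hcell : ∫ x in Ioo (c m) (c (m + 1)), g x ∂μ ≤ (1 / 2 : ℝ) ^ m * ∫ x in Ioo a b, g x ∂μ :=
    htail m ▸ setIntegral_le_of_subset hg (hint.mono_set (Ioo_subset_Ioo_left hac))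
      (Ioo_subset_Ioo_right (hcb _))
  have htail_t : (1 / 2 : ℝ) ^ (m + 2) * ∫ x in Ioo a b, g x ∂μ ≤ ∫ x in Ioo t b, g x ∂μ :=
    htail (m + 2) ▸ setIntegral_le_of_subset hg (hint.mono_set (Ioo_subset_Ioo_left hat))
      (Ioo_subset_Ioo_left htc)
  calc ∫ x in Ioo (c m) (c (m + 1)), g x ∂μ
      ≤ 4 * ((1 / 2 : ℝ) ^ (m + 2) * ∫ x in Ioo a b, g x ∂μ) := by
        convert hcell using 1; ring
    _ ≤ 4 * ∫ x in Ioo t b, g x ∂μ := by gcongr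

lemma sqrt_mul_sqrt_div_two_le {K P A B : ℝ} (hK : K ≤ 4 * A) (hP : P ≤ B) :
    √K * √P / 2 ≤ √A * √B := by
  have hKA : √K ≤ 2 * √A :=
    calc √K ≤ √(4 * A) := Real.sqrt_le_sqrt hK
      _ = 2 * √A := by rw [Real.sqrt_mul zero_le_four, show (4 : ℝ) = 2 ^ 2 by norm_num,
        Real.sqrt_sq zero_le_two]
  have := mul_le_mul hKA (Real.sqrt_le_sqrt hP) (Real.sqrt_nonneg _) (by positivity)
  linarith

theorem Omega_lower_bound_on_dyadic_cell_general
    (a b : ℝ) (κ φ : ℝ → ℂ)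
    (hκL2 : IntegrableOn (fun s => ‖κ s‖ ^ 2) (Ioo a b))
    (hφL2 : ∀ c ∈ Ioo a b, IntegrableOn (fun s => ‖φ s‖ ^ 2) (Ioo a c))
    (c : ℕ → ℝ) (hc0 : c 0 = a) (hcmono : StrictMono c) (hcb : ∀ n, c n < b)
    (htail : ∀ n, ∫ s in Ioo (c n) b, ‖κ s‖ ^ 2
      = (1/2 : ℝ) ^ n * ∫ s in Ioo a b, ‖κ s‖ ^ 2)
    (Ω : ℝ → ℝ)
    (hΩ : ∀ t, Ω t = Real.sqrt (∫ s in Ioo t b, ‖κ s‖ ^ 2) *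
      Real.sqrt (∫ s in Ioo a t, ‖φ s‖ ^ 2))
    (ω : ℕ → ℝ)
    (hω : ∀ n, ω n = Real.sqrt (∫ s in Ioo (c (n - 1)) (c n), ‖κ s‖ ^ 2) *
      Real.sqrt (∫ s in Ioo (c (n - 1)) (c n), ‖φ s‖ ^ 2)) :
    ∀ n : ℕ, 2 ≤ n → ∀ t ∈ Ioo (c (n - 1)) (c n), ω (n - 1) / 2 ≤ Ω t := by
  rintro n hn t ⟨hct, htc⟩
  obtain ⟨m, rfl⟩ : ∃ m, n = m + 2 := ⟨n - 2, by omega⟩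
  simp only [show m + 2 - 1 = m + 1 by omega] at hct htc ⊢
  have hac : ∀ k, a ≤ c k := fun k => hc0 ▸ hcmono.monotone (Nat.zero_le k)
  have hat : a < t := (hac _).trans_lt hct
  rw [hΩ, hω, Nat.add_sub_cancel]
  apply sqrt_mul_sqrt_div_two_le
  · exact setIntegral_dyadic_cell_le_four_mul_tail (fun _ => by positivity) hκL2 hc0
      hcmono.monotone (fun n => (hcb n).le) htail m hat.le htc.le
  · exact setIntegral_le_of_subset (fun _ => by positivity) (hφL2 t ⟨hat, htc.trans (hcb _)⟩)
      (Ioo_subset_Ioo (hac m) hct.le)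

theorem Omega_lower_bound_on_dyadic_cell
    (a b : ℝ) (hab : a < b) (κ φ : ℝ → ℂ)
    (hκmeas : Measurable κ) (hφmeas : Measurable φ)
    (hκL2 : IntegrableOn (fun s => ‖κ s‖ ^ 2) (Ioo a b))
    (hκpos : 0 < ∫ s in Ioo a b, ‖κ s‖ ^ 2)
    (hφL2 : ∀ c ∈ Ioo a b, IntegrableOn (fun s => ‖φ s‖ ^ 2) (Ioo a c))
    (c : ℕ → ℝ) (hc0 : c 0 = a) (hcmono : StrictMono c) (hcb : ∀ n, c n < b)
    (htail : ∀ n, ∫ s in Ioo (c n) b, ‖κ s‖ ^ 2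
      = (1/2 : ℝ) ^ n * ∫ s in Ioo a b, ‖κ s‖ ^ 2)
    (Ω : ℝ → ℝ)
    (hΩ : ∀ t, Ω t = Real.sqrt (∫ s in Ioo t b, ‖κ s‖ ^ 2) *
      Real.sqrt (∫ s in Ioo a t, ‖φ s‖ ^ 2))
    (ω : ℕ → ℝ)
    (hω : ∀ n, ω n = Real.sqrt (∫ s in Ioo (c (n - 1)) (c n), ‖κ s‖ ^ 2) *
      Real.sqrt (∫ s in Ioo (c (n - 1)) (c n), ‖φ s‖ ^ 2)) :
    ∀ n : ℕ, 2 ≤ n → ∀ t ∈ Ioo (c (n - 1)) (c n), ω (n - 1) / 2 ≤ Ω t :=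
  Omega_lower_bound_on_dyadic_cell_general a b κ φ hκL2 hφL2 c hc0 hcmono hcb htail Ω hΩ ω hω
end

section
/- With the dyadic setup for κ, φ on (a,b), for every t ∈ J_n: Ω(t) ≤ (∑_{k=1}^n ‖1_{J_k}φ‖) · 2^{-(n-1)/2} ‖κ‖, where Ω(t) = ‖1_{(t,b)}κ‖·‖1_{(a,t)}φ‖. -/
/-!
For `t ∈ J_n` the κ-factor is at most the tail norm from `c_{n-1}`, which is
`2^{-(n-1)/2} ‖κ‖` by the choice of the `c_k`. The φ-factor is at most `‖1_{(a,c_n)} φ‖`;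
since `(a, c_n)` is the union of `J_1, …, J_n` up to null sets, its square splits as a sum,
and subadditivity of `√` bounds it by `∑ ‖1_{J_k} φ‖`.
-/

open MeasureTheory Set

lemma Real.sqrt_sum_le_sum_sqrt {ι : Type*} (s : Finset ι) {f : ι → ℝ}
    (hf : ∀ i ∈ s, 0 ≤ f i) : √(∑ i ∈ s, f i) ≤ ∑ i ∈ s, √(f i) := by
  rw [Real.sqrt_le_left (Finset.sum_nonneg fun i _ => Real.sqrt_nonneg _)]
  calc ∑ i ∈ s, f i = ∑ i ∈ s, √(f i) ^ 2 :=
        Finset.sum_congr rfl fun i hi => (Real.sq_sqrt (hf i hi)).symm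
    _ ≤ (∑ i ∈ s, √(f i)) ^ 2 :=
        Finset.sum_sq_le_sq_sum_of_nonneg fun i _ => Real.sqrt_nonneg _

lemma Real.sqrt_one_half_pow (m : ℕ) : √((1 / 2 : ℝ) ^ m) = 2 ^ (-(m : ℝ) / 2) := by
  rw [Real.sqrt_eq_rpow, ← Real.rpow_natCast, ← Real.rpow_mul (by norm_num), one_div,
    Real.inv_rpow (by norm_num), ← Real.rpow_neg (by norm_num)]
  ring_nf

lemma Finset.sum_Icc_one_eq_sum_range {M : Type*} [AddCommMonoid M] (g : ℕ → M) (n : ℕ) :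
    ∑ k ∈ Icc 1 n, g k = ∑ k ∈ range n, g (k + 1) := by
  rw [range_eq_Ico, sum_Ico_add']
  rfl

section Partition

variable {E : Type*} [NormedAddCommGroup E] [NormedSpace ℝ E] {μ : Measure ℝ}
  [NullSingletonClass μ] {c : ℕ → ℝ} {n : ℕ}

lemma setIntegral_Ioo_eq_sum_of_monotone {f : ℝ → E} (hc : Monotone c)
    (hf : IntegrableOn f (Ioo (c 0) (c n)) μ) :
    ∫ x in Ioo (c 0) (c n), f x ∂μ =
      ∑ k ∈ Finset.range n, ∫ x in Ioo (c k) (c (k + 1)), f x ∂μ := by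
  have hint : ∀ k < n, IntervalIntegrable f μ (c k) (c (k + 1)) := fun k hk => by
    rw [intervalIntegrable_iff_integrableOn_Ioo_of_le (hc k.le_succ)]
    exact hf.mono_set (Ioo_subset_Ioo (hc (Nat.zero_le k)) (hc hk))
  rw [← integral_Ioc_eq_integral_Ioo, ← intervalIntegral.integral_of_le (hc (Nat.zero_le n)),
    ← intervalIntegral.sum_integral_adjacent_intervals hint]
  refine Finset.sum_congr rfl fun k _ => ?_
  rw [intervalIntegral.integral_of_le (hc k.le_succ), integral_Ioc_eq_integral_Ioo]

lemma sqrt_setIntegral_Ioo_le_sum_sqrt {f : ℝ → ℝ} (hf0 : ∀ x, 0 ≤ f x) (hc : Monotone c)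
    (hf : IntegrableOn f (Ioo (c 0) (c n)) μ) {t : ℝ} (ht : t ≤ c n) :
    √(∫ x in Ioo (c 0) t, f x ∂μ) ≤
      ∑ k ∈ Finset.range n, √(∫ x in Ioo (c k) (c (k + 1)), f x ∂μ) :=
  calc √(∫ x in Ioo (c 0) t, f x ∂μ)
      ≤ √(∫ x in Ioo (c 0) (c n), f x ∂μ) := Real.sqrt_le_sqrt <|
        setIntegral_mono_set hf (ae_of_all _ hf0) (Ioo_subset_Ioo_right ht).eventuallyLE
    _ = √(∑ k ∈ Finset.range n, ∫ x in Ioo (c k) (c (k + 1)), f x ∂μ) := by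
        rw [setIntegral_Ioo_eq_sum_of_monotone hc hf]
    _ ≤ _ := Real.sqrt_sum_le_sum_sqrt _ fun _ _ =>
        setIntegral_nonneg measurableSet_Ioo fun x _ => hf0 x

end Partition

theorem Omega_upper_bound_on_dyadic_cell_general
    (a b : ℝ) (κ φ : ℝ → ℂ)
    (hκL2 : IntegrableOn (fun s => ‖κ s‖ ^ 2) (Ioo a b))
    (hφL2 : ∀ c ∈ Ioo a b, IntegrableOn (fun s => ‖φ s‖ ^ 2) (Ioo a c))
    (c : ℕ → ℝ) (hc0 : c 0 = a) (hcmono : StrictMono c) (hcb : ∀ n, c n < b)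
    (htail : ∀ n, ∫ s in Ioo (c n) b, ‖κ s‖ ^ 2
      = (1/2 : ℝ) ^ n * ∫ s in Ioo a b, ‖κ s‖ ^ 2)
    (Ω : ℝ → ℝ)
    (hΩ : ∀ t, Ω t = Real.sqrt (∫ s in Ioo t b, ‖κ s‖ ^ 2) *
      Real.sqrt (∫ s in Ioo a t, ‖φ s‖ ^ 2)) :
    ∀ n : ℕ, 1 ≤ n → ∀ t ∈ Ioo (c (n - 1)) (c n),
      Ω t ≤ (∑ k ∈ Finset.Icc 1 n,
          Real.sqrt (∫ s in Ioo (c (k - 1)) (c k), ‖φ s‖ ^ 2)) *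
        ((2 : ℝ) ^ (-(((n : ℝ) - 1) / 2)) * Real.sqrt (∫ s in Ioo a b, ‖κ s‖ ^ 2)) := by
  intro n hn t ht
  obtain ⟨m, rfl⟩ := Nat.exists_eq_add_of_le' hn
  rw [Nat.add_sub_cancel] at ht
  have hc := hcmono.monotone
  have hκ : √(∫ s in Ioo t b, ‖κ s‖ ^ 2) ≤
      2 ^ (-(m : ℝ) / 2) * √(∫ s in Ioo a b, ‖κ s‖ ^ 2) :=
    calc √(∫ s in Ioo t b, ‖κ s‖ ^ 2)
        ≤ √(∫ s in Ioo (c m) b, ‖κ s‖ ^ 2) := Real.sqrt_le_sqrt <|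
          setIntegral_mono_set (hκL2.mono_set (Ioo_subset_Ioo_left (hc0 ▸ hc m.zero_le)))
            (ae_of_all _ fun _ => by positivity) (Ioo_subset_Ioo_left ht.1.le).eventuallyLE
      _ = 2 ^ (-(m : ℝ) / 2) * √(∫ s in Ioo a b, ‖κ s‖ ^ 2) := by
        rw [htail, Real.sqrt_mul (by positivity), Real.sqrt_one_half_pow]
  have hφ : √(∫ s in Ioo a t, ‖φ s‖ ^ 2) ≤
      ∑ k ∈ Finset.Icc 1 (m + 1), √(∫ s in Ioo (c (k - 1)) (c k), ‖φ s‖ ^ 2) := by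
    rw [Finset.sum_Icc_one_eq_sum_range, ← hc0]
    exact sqrt_setIntegral_Ioo_le_sum_sqrt (fun _ => by positivity) hc
      (hc0 ▸ hφL2 _ ⟨hc0 ▸ hcmono m.succ_pos, hcb _⟩) ht.2.le
  have hexp : -((((m + 1 : ℕ) : ℝ) - 1) / 2) = -(m : ℝ) / 2 := by push_cast; ring
  rw [hΩ, hexp, mul_comm (√_)]
  exact mul_le_mul hφ hκ (Real.sqrt_nonneg _) (by positivity)

theorem Omega_upper_bound_on_dyadic_cell
    (a b : ℝ) (hab : a < b) (κ φ : ℝ → ℂ)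
    (hκmeas : Measurable κ) (hφmeas : Measurable φ)
    (hκL2 : IntegrableOn (fun s => ‖κ s‖ ^ 2) (Ioo a b))
    (hκpos : 0 < ∫ s in Ioo a b, ‖κ s‖ ^ 2)
    (hφL2 : ∀ c ∈ Ioo a b, IntegrableOn (fun s => ‖φ s‖ ^ 2) (Ioo a c))
    (c : ℕ → ℝ) (hc0 : c 0 = a) (hcmono : StrictMono c) (hcb : ∀ n, c n < b)
    (htail : ∀ n, ∫ s in Ioo (c n) b, ‖κ s‖ ^ 2
      = (1/2 : ℝ) ^ n * ∫ s in Ioo a b, ‖κ s‖ ^ 2)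
    (Ω : ℝ → ℝ)
    (hΩ : ∀ t, Ω t = Real.sqrt (∫ s in Ioo t b, ‖κ s‖ ^ 2) *
      Real.sqrt (∫ s in Ioo a t, ‖φ s‖ ^ 2)) :
    ∀ n : ℕ, 1 ≤ n → ∀ t ∈ Ioo (c (n - 1)) (c n),
      Ω t ≤ (∑ k ∈ Finset.Icc 1 n,
          Real.sqrt (∫ s in Ioo (c (k - 1)) (c k), ‖φ s‖ ^ 2)) *
        ((2 : ℝ) ^ (-(((n : ℝ) - 1) / 2)) * Real.sqrt (∫ s in Ioo a b, ‖κ s‖ ^ 2)) :=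
  Omega_upper_bound_on_dyadic_cell_general a b κ φ hκL2 hφL2 c hc0 hcmono hcb htail Ω hΩ
end

section
/- With the dyadic setup, lim_{n→∞} ω_n = 0 if and only if lim_{t↗b} ‖1_{(a,t)}φ‖·‖1_{(t,b)}κ‖ = 0, where ω_n = ‖1_{J_n}κ‖·‖1_{J_n}φ‖. -/
/-!
Write `K t = ∫_{(t,b)} ‖κ‖²` and `F t = ∫_{(a,t)} ‖φ‖²`, so that `Ω t² = K t * F t`, and put
`Pₙ = K (cₙ) * F (cₙ)`. Since `K` halves from one dyadic point to the next, the `κ`-mass of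
`J_{n+1}` equals `K (c_{n+1})`, whence `ωₙ² ≤ Pₙ` and `P_{n+1} = Pₙ / 2 + ω_{n+1}²`. Unrolling
the recurrence, `Pₙ = ∑ⱼ 2⁻ʲ ω_{n-j}²` is a Toeplitz average of the `ω²`, so `ωₙ → 0` iff
`Pₙ → 0`. For `cₘ ≤ t < c_{m+1}` monotonicity gives `K t * F t ≤ 2 P_{m+1}`, so `Pₙ → 0` forces
`Ω → 0` at `b`. Conversely, if `cₙ → b` then `Pₙ = Ω (cₙ)²` inherits the limit, and otherwise
`F (cₙ)` stays bounded while `K (cₙ) = 2⁻ⁿ K a`.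
-/

open MeasureTheory Set Filter Topology

theorem tendsto_sum_range_pow_smul_sub {E : Type*} [NormedAddCommGroup E] [NormedSpace ℝ E]
    [CompleteSpace E] {r : ℝ} (hr₀ : 0 ≤ r) (hr₁ : r < 1) {w : ℕ → E}
    (hw : Tendsto w atTop (𝓝 0)) :
    Tendsto (fun n => ∑ j ∈ Finset.range (n + 1), r ^ j • w (n - j)) atTop (𝓝 0) := by
  obtain ⟨C, hC⟩ : ∃ C, ∀ n, ‖w n‖ ≤ C :=
    hw.norm.bddAbove_range.imp fun C hC n => hC ⟨n, rfl⟩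
  have hdom := tendsto_tsum_of_dominated_convergence (𝓕 := atTop)
    (f := fun n j => if j ≤ n then r ^ j • w (n - j) else 0) (g := fun _ => (0 : E))
    ((summable_geometric_of_lt_one hr₀ hr₁).mul_right C) (fun j => ?_)
    (Eventually.of_forall fun n j => ?_)
  · simp only [tsum_zero] at hdom
    refine hdom.congr fun n => ?_
    rw [tsum_eq_sum (s := Finset.range (n + 1)) fun j hj => by simp_all]
    exact Finset.sum_congr rfl fun j hj => if_pos (Nat.lt_succ_iff.mp (Finset.mem_range.mp hj))
  · have : Tendsto (fun n => r ^ j • w (n - j)) atTop (𝓝 0) := by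
      simpa using (hw.comp (tendsto_sub_atTop_nat j)).const_smul (r ^ j)
    exact this.congr' ((eventually_ge_atTop j).mono fun n hn => (if_pos hn).symm)
  · split_ifs
    · rw [norm_smul, Real.norm_of_nonneg (pow_nonneg hr₀ j)]
      exact mul_le_mul_of_nonneg_left (hC _) (pow_nonneg hr₀ j)
    · simpa using mul_nonneg (pow_nonneg hr₀ j) ((norm_nonneg _).trans (hC 0))

theorem tendsto_zero_of_eq_smul_add {E : Type*} [NormedAddCommGroup E] [NormedSpace ℝ E]
    [CompleteSpace E] {r : ℝ} (hr₀ : 0 ≤ r) (hr₁ : r < 1) {P w : ℕ → E}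
    (hP : ∀ n, P (n + 1) = r • P n + w (n + 1)) (hw : Tendsto w atTop (𝓝 0)) :
    Tendsto P atTop (𝓝 0) := by
  set w' := Function.update w 0 (P 0)
  have hw' : Tendsto w' atTop (𝓝 0) :=
    hw.congr' ((eventually_ne_atTop 0).mono fun n hn => (Function.update_of_ne hn _ _).symm)
  have hP_eq : ∀ n, P n = ∑ j ∈ Finset.range (n + 1), r ^ j • w' (n - j) := by
    intro n
    induction n with
    | zero => simp [w']
    | succ n ih =>
      rw [Finset.sum_range_succ', hP, ih, Finset.smul_sum]
      simp [w', pow_succ', mul_smul]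
  simpa only [← hP_eq] using tendsto_sum_range_pow_smul_sub hr₀ hr₁ hw'

theorem tendsto_sqrt_mul_sqrt_nhds_zero_iff {α : Type*} {l : Filter α} {f g : α → ℝ}
    (hf : 0 ≤ f) (hg : 0 ≤ g) :
    Tendsto (fun x => √(f x) * √(g x)) l (𝓝 0) ↔ Tendsto (fun x => f x * g x) l (𝓝 0) := by
  simp_rw [← Real.sqrt_mul (hf _)]
  refine ⟨fun h => ?_, fun h => by simpa using h.sqrt⟩
  simpa [Real.sq_sqrt (mul_nonneg (hf _) (hg _))] using h.pow 2

theorem Monotone.tendsto_nhdsLT_or_forall_le {α : Type*} [ConditionallyCompleteLinearOrder α]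
    [TopologicalSpace α] [OrderTopology α] {c : ℕ → α} {b : α} (hc : Monotone c)
    (hcb : ∀ n, c n < b) : Tendsto c atTop (𝓝[<] b) ∨ ∃ L < b, ∀ n, c n ≤ L := by
  have hbdd : BddAbove (range c) := ⟨b, forall_mem_range.2 fun n => (hcb n).le⟩
  rcases (ciSup_le fun n => (hcb n).le).eq_or_lt with h | h
  · exact .inl <| tendsto_nhdsWithin_of_tendsto_nhds_of_eventually_within c
      (h ▸ tendsto_atTop_ciSup hc hbdd) (.of_forall hcb)
  · exact .inr ⟨_, h, le_ciSup hbdd⟩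

theorem exists_mem_Ico_succ_of_le_of_lt {α : Type*} [LinearOrder α] {c : ℕ → α} {t : α}
    (h₀ : c 0 ≤ t) {k : ℕ} (hk : t < c k) : ∃ m, t ∈ Ico (c m) (c (m + 1)) := by
  induction k with
  | zero => exact absurd hk h₀.not_gt
  | succ k ih => exact if h : t < c k then ih h else ⟨k, not_lt.1 h, hk⟩

theorem setIntegral_Ioo_eq_add {E : Type*} [NormedAddCommGroup E] [NormedSpace ℝ E]
    {f : ℝ → E} {x y z : ℝ} (hxy : x ≤ y) (hyz : y ≤ z) (hf : IntegrableOn f (Ioo x z)) :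
    ∫ s in Ioo x z, f s = (∫ s in Ioo x y, f s) + ∫ s in Ioo y z, f s := by
  have := intervalIntegral.integral_add_adjacent_intervals
    ((intervalIntegrable_iff_integrableOn_Ioo_of_le hxy).2 (hf.mono_set (Ioo_subset_Ioo_right hyz)))
    ((intervalIntegrable_iff_integrableOn_Ioo_of_le hyz).2 (hf.mono_set (Ioo_subset_Ioo_left hxy)))
  simpa only [intervalIntegral.integral_of_le, hxy, hyz, hxy.trans hyz,
    integral_Ioc_eq_integral_Ioo] using this.symm

theorem setIntegral_Ioo_mono {f : ℝ → ℝ} (hf : 0 ≤ f) {x y x' y' : ℝ}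
    (hint : IntegrableOn f (Ioo x y)) (hx : x ≤ x') (hy : y' ≤ y) :
    ∫ s in Ioo x' y', f s ≤ ∫ s in Ioo x y, f s :=
  setIntegral_mono_set hint (.of_forall hf) (Ioo_subset_Ioo hx hy).eventuallyLE

theorem tendsto_one_half_pow_mul (x : ℝ) :
    Tendsto (fun n : ℕ => (1 / 2 : ℝ) ^ n * x) atTop (𝓝 0) := by
  simpa using (tendsto_pow_atTop_nhds_zero_of_lt_one (r := (1 / 2 : ℝ))
    (by norm_num) (by norm_num)).mul_const x

structure IsDyadicPartition (u : ℝ → ℝ) (a b : ℝ) (c : ℕ → ℝ) : Prop where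
  zero : c 0 = a
  strictMono : StrictMono c
  lt : ∀ n, c n < b
  integral_tail : ∀ n, ∫ s in Ioo (c n) b, u s = (1 / 2 : ℝ) ^ n * ∫ s in Ioo a b, u s

namespace IsDyadicPartition

variable {u v : ℝ → ℝ} {a b : ℝ} {c : ℕ → ℝ}

theorem le (hc : IsDyadicPartition u a b c) (n : ℕ) : a ≤ c n :=
  hc.zero ▸ hc.strictMono.monotone n.zero_le

theorem succ_mem_Ioo (hc : IsDyadicPartition u a b c) (n : ℕ) : c (n + 1) ∈ Ioo a b :=
  ⟨hc.zero ▸ hc.strictMono n.succ_pos, hc.lt _⟩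

theorem integral_tail_eq_two_mul (hc : IsDyadicPartition u a b c) (n : ℕ) :
    ∫ s in Ioo (c n) b, u s = 2 * ∫ s in Ioo (c (n + 1)) b, u s := by
  rw [hc.integral_tail, hc.integral_tail, pow_succ]
  ring

theorem integral_Ioo_succ (hc : IsDyadicPartition u a b c) (hu : IntegrableOn u (Ioo a b))
    (n : ℕ) : ∫ s in Ioo (c n) (c (n + 1)), u s = ∫ s in Ioo (c (n + 1)) b, u s := by
  have := setIntegral_Ioo_eq_add (hc.strictMono n.lt_succ_self).le (hc.lt _).le
    (hu.mono_set (Ioo_subset_Ioo_left (hc.le n)))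
  rw [hc.integral_tail_eq_two_mul n] at this
  linarith

theorem integral_tail_eq_zero_of_forall_le (hc : IsDyadicPartition u a b c) (hu₀ : 0 ≤ u)
    (hu : IntegrableOn u (Ioo a b)) {t : ℝ} (ht : ∀ n, c n ≤ t) :
    ∫ s in Ioo t b, u s = 0 := by
  refine le_antisymm (ge_of_tendsto' (tendsto_one_half_pow_mul (∫ s in Ioo a b, u s)) fun n => ?_)
    (integral_nonneg hu₀)
  rw [← hc.integral_tail]
  exact setIntegral_Ioo_mono hu₀ (hu.mono_set (Ioo_subset_Ioo_left (hc.le n))) (ht n) le_rfl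

theorem integral_block_mul_le (hc : IsDyadicPartition u a b c) (hu₀ : 0 ≤ u)
    (hu : IntegrableOn u (Ioo a b)) (hv₀ : 0 ≤ v) (hv : ∀ t ∈ Ioo a b, IntegrableOn v (Ioo a t))
    (n : ℕ) :
    (∫ s in Ioo (c (n - 1)) (c n), u s) * ∫ s in Ioo (c (n - 1)) (c n), v s ≤
      (∫ s in Ioo (c n) b, u s) * ∫ s in Ioo a (c n), v s := by
  cases n with
  | zero => simp [hc.zero] -- `0 - 1 = 0`, so the block `J₀` is empty
  | succ n =>
    rw [Nat.add_sub_cancel, hc.integral_Ioo_succ hu]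
    exact mul_le_mul_of_nonneg_left
      (setIntegral_Ioo_mono hv₀ (hv _ (hc.succ_mem_Ioo n)) (hc.le n) le_rfl) (integral_nonneg hu₀)

theorem integral_tail_mul_succ (hc : IsDyadicPartition u a b c) (hu : IntegrableOn u (Ioo a b))
    (hv : ∀ t ∈ Ioo a b, IntegrableOn v (Ioo a t)) (n : ℕ) :
    (∫ s in Ioo (c (n + 1)) b, u s) * ∫ s in Ioo a (c (n + 1)), v s =
      1 / 2 * ((∫ s in Ioo (c n) b, u s) * ∫ s in Ioo a (c n), v s) +
        (∫ s in Ioo (c n) (c (n + 1)), u s) * ∫ s in Ioo (c n) (c (n + 1)), v s := by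
  rw [setIntegral_Ioo_eq_add (hc.le n) (hc.strictMono n.lt_succ_self).le
    (hv _ (hc.succ_mem_Ioo n)), hc.integral_Ioo_succ hu, hc.integral_tail_eq_two_mul n]
  ring

theorem tendsto_block_iff (hc : IsDyadicPartition u a b c) (hu₀ : 0 ≤ u)
    (hu : IntegrableOn u (Ioo a b)) (hv₀ : 0 ≤ v) (hv : ∀ t ∈ Ioo a b, IntegrableOn v (Ioo a t)) :
    Tendsto (fun n => (∫ s in Ioo (c (n - 1)) (c n), u s) * ∫ s in Ioo (c (n - 1)) (c n), v s)
        atTop (𝓝 0) ↔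
      Tendsto (fun n => (∫ s in Ioo (c n) b, u s) * ∫ s in Ioo a (c n), v s) atTop (𝓝 0) := by
  refine ⟨fun h => tendsto_zero_of_eq_smul_add (r := 1 / 2) (by norm_num) (by norm_num)
    (fun n => ?_) h, fun h => squeeze_zero (fun n => ?_) (hc.integral_block_mul_le hu₀ hu hv₀ hv) h⟩
  · simpa using hc.integral_tail_mul_succ hu hv n
  · exact mul_nonneg (integral_nonneg hu₀) (integral_nonneg hv₀)

theorem integral_mul_le_of_mem_Ico (hc : IsDyadicPartition u a b c) (hu₀ : 0 ≤ u)
    (hu : IntegrableOn u (Ioo a b)) (hv₀ : 0 ≤ v) (hv : ∀ t ∈ Ioo a b, IntegrableOn v (Ioo a t))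
    {t : ℝ} {m : ℕ} (ht : t ∈ Ico (c m) (c (m + 1))) :
    (∫ s in Ioo t b, u s) * ∫ s in Ioo a t, v s ≤
      2 * ((∫ s in Ioo (c (m + 1)) b, u s) * ∫ s in Ioo a (c (m + 1)), v s) := by
  rw [← mul_assoc, ← hc.integral_tail_eq_two_mul]
  exact mul_le_mul
    (setIntegral_Ioo_mono hu₀ (hu.mono_set (Ioo_subset_Ioo_left (hc.le m))) ht.1 le_rfl)
    (setIntegral_Ioo_mono hv₀ (hv _ (hc.succ_mem_Ioo m)) le_rfl ht.2.le) (integral_nonneg hv₀)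
    (integral_nonneg hu₀)

theorem exists_integral_mul_le (hc : IsDyadicPartition u a b c) (hu₀ : 0 ≤ u)
    (hu : IntegrableOn u (Ioo a b)) (hv₀ : 0 ≤ v) (hv : ∀ t ∈ Ioo a b, IntegrableOn v (Ioo a t))
    {N : ℕ} {t : ℝ} (ht : c N ≤ t) :
    ∃ n ≥ N, (∫ s in Ioo t b, u s) * ∫ s in Ioo a t, v s ≤
      2 * ((∫ s in Ioo (c n) b, u s) * ∫ s in Ioo a (c n), v s) := by
  by_cases h : ∃ k, t < c k
  · obtain ⟨k, hk⟩ := h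
    obtain ⟨m, hm⟩ := exists_mem_Ico_succ_of_le_of_lt (hc.zero ▸ (hc.le N).trans ht) hk
    exact ⟨m + 1, (hc.strictMono.lt_iff_lt.1 (ht.trans_lt hm.2)).le,
      hc.integral_mul_le_of_mem_Ico hu₀ hu hv₀ hv hm⟩
  · simp only [not_exists, not_lt] at h
    refine ⟨N, le_rfl, ?_⟩
    rw [hc.integral_tail_eq_zero_of_forall_le hu₀ hu h, zero_mul]
    exact mul_nonneg zero_le_two (mul_nonneg (integral_nonneg hu₀) (integral_nonneg hv₀))

theorem tendsto_nhdsLT_iff (hc : IsDyadicPartition u a b c) (hu₀ : 0 ≤ u)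
    (hu : IntegrableOn u (Ioo a b)) (hv₀ : 0 ≤ v) (hv : ∀ t ∈ Ioo a b, IntegrableOn v (Ioo a t)) :
    Tendsto (fun n => (∫ s in Ioo (c n) b, u s) * ∫ s in Ioo a (c n), v s) atTop (𝓝 0) ↔
      Tendsto (fun t => (∫ s in Ioo t b, u s) * ∫ s in Ioo a t, v s) (𝓝[<] b) (𝓝 0) := by
  have hnonneg : ∀ x y, 0 ≤ (∫ s in Ioo x b, u s) * ∫ s in Ioo a y, v s := fun _ _ =>
    mul_nonneg (integral_nonneg hu₀) (integral_nonneg hv₀)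
  constructor
  · intro h
    refine tendsto_order.2 ⟨fun ε hε => .of_forall fun t => hε.trans_le (hnonneg t t),
      fun ε hε => ?_⟩
    obtain ⟨N, hN⟩ := eventually_atTop.1
      ((h.const_mul 2).eventually (gt_mem_nhds (by rwa [mul_zero])))
    filter_upwards [Ioo_mem_nhdsLT (hc.lt N)] with t ht
    obtain ⟨n, hn, hle⟩ := hc.exists_integral_mul_le hu₀ hu hv₀ hv ht.1.le
    exact hle.trans_lt (hN n hn)
  · intro h
    rcases hc.strictMono.monotone.tendsto_nhdsLT_or_forall_le hc.lt with hlim | ⟨L, hLb, hL⟩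
    · exact h.comp hlim
    refine squeeze_zero (fun n => hnonneg _ _) (fun n => ?_)
      (tendsto_one_half_pow_mul ((∫ s in Ioo a b, u s) * ∫ s in Ioo a L, v s))
    rw [hc.integral_tail, mul_assoc]
    refine mul_le_mul_of_nonneg_left (mul_le_mul_of_nonneg_left ?_ (integral_nonneg hu₀))
      (by positivity)
    exact setIntegral_Ioo_mono hv₀ (hv L ⟨(hc.succ_mem_Ioo 0).1.trans_le (hL 1), hLb⟩) le_rfl (hL n)

end IsDyadicPartition

theorem omega_tendsto_zero_iff_Omega_tendsto_zero_general
    (a b : ℝ) (κ φ : ℝ → ℂ)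
    (hκL2 : IntegrableOn (fun s => ‖κ s‖ ^ 2) (Ioo a b))
    (hφL2 : ∀ c ∈ Ioo a b, IntegrableOn (fun s => ‖φ s‖ ^ 2) (Ioo a c))
    (c : ℕ → ℝ) (hc0 : c 0 = a) (hcmono : StrictMono c) (hcb : ∀ n, c n < b)
    (htail : ∀ n, ∫ s in Ioo (c n) b, ‖κ s‖ ^ 2
      = (1/2 : ℝ) ^ n * ∫ s in Ioo a b, ‖κ s‖ ^ 2)
    (Ω : ℝ → ℝ)
    (hΩ : ∀ t, Ω t = Real.sqrt (∫ s in Ioo t b, ‖κ s‖ ^ 2) *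
      Real.sqrt (∫ s in Ioo a t, ‖φ s‖ ^ 2))
    (ω : ℕ → ℝ)
    (hω : ∀ n, ω n = Real.sqrt (∫ s in Ioo (c (n - 1)) (c n), ‖κ s‖ ^ 2) *
      Real.sqrt (∫ s in Ioo (c (n - 1)) (c n), ‖φ s‖ ^ 2)) :
    Tendsto ω atTop (𝓝 0) ↔ Tendsto Ω (𝓝[<] b) (𝓝 0) := by
  obtain rfl : Ω = _ := funext hΩ
  obtain rfl : ω = _ := funext hω
  have hc : IsDyadicPartition (fun s => ‖κ s‖ ^ 2) a b c := ⟨hc0, hcmono, hcb, htail⟩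
  have hκ₀ : 0 ≤ fun s => ‖κ s‖ ^ 2 := fun s => by positivity
  have hφ₀ : 0 ≤ fun s => ‖φ s‖ ^ 2 := fun s => by positivity
  rw [tendsto_sqrt_mul_sqrt_nhds_zero_iff (fun _ => integral_nonneg hκ₀)
      (fun _ => integral_nonneg hφ₀),
    tendsto_sqrt_mul_sqrt_nhds_zero_iff (fun _ => integral_nonneg hκ₀)
      (fun _ => integral_nonneg hφ₀)]
  exact (hc.tendsto_block_iff hκ₀ hκL2 hφ₀ hφL2).trans (hc.tendsto_nhdsLT_iff hκ₀ hκL2 hφ₀ hφL2)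

theorem omega_tendsto_zero_iff_Omega_tendsto_zero
    (a b : ℝ) (hab : a < b) (κ φ : ℝ → ℂ)
    (hκmeas : Measurable κ) (hφmeas : Measurable φ)
    (hκL2 : IntegrableOn (fun s => ‖κ s‖ ^ 2) (Ioo a b))
    (hκpos : 0 < ∫ s in Ioo a b, ‖κ s‖ ^ 2)
    (hφL2 : ∀ c ∈ Ioo a b, IntegrableOn (fun s => ‖φ s‖ ^ 2) (Ioo a c))
    (c : ℕ → ℝ) (hc0 : c 0 = a) (hcmono : StrictMono c) (hcb : ∀ n, c n < b)
    (htail : ∀ n, ∫ s in Ioo (c n) b, ‖κ s‖ ^ 2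
      = (1/2 : ℝ) ^ n * ∫ s in Ioo a b, ‖κ s‖ ^ 2)
    (Ω : ℝ → ℝ)
    (hΩ : ∀ t, Ω t = Real.sqrt (∫ s in Ioo t b, ‖κ s‖ ^ 2) *
      Real.sqrt (∫ s in Ioo a t, ‖φ s‖ ^ 2))
    (ω : ℕ → ℝ)
    (hω : ∀ n, ω n = Real.sqrt (∫ s in Ioo (c (n - 1)) (c n), ‖κ s‖ ^ 2) *
      Real.sqrt (∫ s in Ioo (c (n - 1)) (c n), ‖φ s‖ ^ 2)) :
    Tendsto ω atTop (𝓝 0) ↔ Tendsto Ω (𝓝[<] b) (𝓝 0) :=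
  omega_tendsto_zero_iff_Omega_tendsto_zero_general a b κ φ hκL2 hφL2 c hc0 hcmono hcb htail Ω hΩ ω
    hω
end

section
/- With the dyadic setup, sup_n ω_n < ∞ if and only if limsup_{t↗b} ‖1_{(a,t)}φ‖·‖1_{(t,b)}κ‖ < ∞. -/
/-!
Put `K t = ∫_{(t,b)} ‖κ‖²` and `P t = ∫_{(a,t)} ‖φ‖²`, so that `Ω t ^ 2 = K t * P t`. The dyadic
choice of the `c n` means `K (c (n-1)) - K (c n) = K (c n) = 2 * K (c (n+1))` for `n ≥ 1`, hence
`ω n ^ 2 = K (c n) * (P (c n) - P (c (n-1))) ≤ Ω (c n) ^ 2`; since `Ω` is bounded on `[a, t₀]` by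
`√(K a * P t₀)`, a bound for `Ω` near `b` bounds every `ω n`.

Conversely `y n = K (c n) * P (c n)` satisfies `y (n+1) = y n / 2 + ω (n+1) ^ 2`, so `y n ≤ 2 C`
when `ω n ^ 2 ≤ C`. For `t ∈ [c n, c (n+1))` monotonicity gives
`Ω t ^ 2 ≤ K (c n) * P (c (n+1)) = 2 * y (n+1) ≤ 4 C`, and a `t` beyond every `c n` has
`K t ≤ 2⁻ⁿ K a` for all `n`, so `Ω t = 0`.
-/

open MeasureTheory Set Filter Topology

theorem setIntegral_Ioo_add_setIntegral_Ioo {E : Type*} [NormedAddCommGroup E]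
    [NormedSpace ℝ E] {μ : Measure ℝ} [NullSingletonClass μ] {f : ℝ → E} {u v w : ℝ}
    (huv : u ≤ v) (hvw : v ≤ w) (hf : IntegrableOn f (Ioo u w) μ) :
    ∫ s in Ioo u v, f s ∂μ + ∫ s in Ioo v w, f s ∂μ = ∫ s in Ioo u w, f s ∂μ := by
  rcases hvw.eq_or_lt with rfl | hvw
  · simp
  have hunion := Ioc_union_Ioo_eq_Ioo huv hvw
  have hdisj : Disjoint (Ioc u v) (Ioo v w) :=
    (Ioc_disjoint_Ioi_same).mono_right Ioo_subset_Ioi_self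
  rw [← integral_Ioc_eq_integral_Ioo, ← hunion,
    setIntegral_union hdisj measurableSet_Ioo (hf.mono_set (hunion ▸ subset_union_left))
      (hf.mono_set (hunion ▸ subset_union_right))]

theorem antitoneOn_setIntegral_Ioo_left {μ : Measure ℝ} {f : ℝ → ℝ} {a b : ℝ}
    (hf : IntegrableOn f (Ioo a b) μ) (hf0 : 0 ≤ f) :
    AntitoneOn (fun t => ∫ s in Ioo t b, f s ∂μ) (Ici a) := fun _ hs _ _ hst =>
  setIntegral_mono_set (hf.mono_set (Ioo_subset_Ioo_left hs)) (.of_forall hf0)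
    (Ioo_subset_Ioo_left hst).eventuallyLE

theorem monotoneOn_setIntegral_Ioo_right {μ : Measure ℝ} {f : ℝ → ℝ} {a : ℝ} {S : Set ℝ}
    (hf : ∀ t ∈ S, IntegrableOn f (Ioo a t) μ) (hf0 : 0 ≤ f) :
    MonotoneOn (fun t => ∫ s in Ioo a t, f s ∂μ) S := fun _ _ t ht hst =>
  setIntegral_mono_set (hf t ht) (.of_forall hf0) (Ioo_subset_Ioo_right hst).eventuallyLE

theorem Real.exists_forall_sqrt_le_iff {ι : Type*} {f : ι → ℝ} :
    (∃ C, ∀ i, √(f i) ≤ C) ↔ ∃ C, ∀ i, f i ≤ C := by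
  simpa only [IsBoundedUnder, IsBounded, eventually_map, eventually_top, Function.comp_apply] using
    Real.sqrt_monotone.isBoundedUnder_le_comp_iff (l := (⊤ : Filter ι)) (f := f)
      Real.tendsto_sqrt_atTop

theorem Real.exists_eventually_sqrt_le_iff {ι : Type*} {l : Filter ι} {f : ι → ℝ} :
    (∃ C, ∀ᶠ i in l, √(f i) ≤ C) ↔ ∃ C, ∀ᶠ i in l, f i ≤ C :=
  Real.sqrt_monotone.isBoundedUnder_le_comp_iff Real.tendsto_sqrt_atTop

theorem exists_mem_Ico_or_forall_le {α : Type*} [LinearOrder α] {c : ℕ → α} {t : α}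
    (h0 : c 0 ≤ t) : (∃ n, t ∈ Ico (c n) (c (n + 1))) ∨ ∀ n, c n ≤ t := by
  refine or_iff_not_imp_left.2 fun h n => ?_
  induction n with
  | zero => exact h0
  | succ n ih => exact not_lt.1 fun ht => h ⟨n, ih, ht⟩

section DyadicBlocks

/- `K` and `P` play the roles of the tail mass of `κ` and the head mass of `φ`; the product
`(K (c (n - 1)) - K (c n)) * (P (c n) - P (c (n - 1)))` is `ω n ^ 2`. -/
variable {a b : ℝ} {c : ℕ → ℝ} {K P : ℝ → ℝ}

theorem mem_Ico_of_monotone (hc0 : c 0 = a) (hc : Monotone c) (hcb : ∀ n, c n < b) (n : ℕ) :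
    c n ∈ Ico a b :=
  ⟨hc0 ▸ hc n.zero_le, hcb n⟩

theorem block_le_mul (hc0 : c 0 = a) (hc : Monotone c) (hcb : ∀ n, c n < b)
    (hK0 : ∀ t ∈ Ico a b, 0 ≤ K t) (hKc : ∀ n, K (c n) = 2 * K (c (n + 1)))
    (hP : MonotoneOn P (Ico a b)) (hPa : P a = 0) (n : ℕ) :
    (K (c (n - 1)) - K (c n)) * (P (c n) - P (c (n - 1))) ≤ K (c n) * P (c n) := by
  have hmem := mem_Ico_of_monotone hc0 hc hcb
  have hΔK : K (c (n - 1)) - K (c n) ≤ K (c n) := by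
    cases n with
    | zero => simpa using hK0 _ (hmem 0)
    | succ n => simp only [Nat.add_sub_cancel]; linarith [hKc n]
  have hPnn : 0 ≤ P (c (n - 1)) :=
    hPa ▸ hP ⟨le_rfl, hc0 ▸ hcb 0⟩ (hmem _) (hmem _).1
  have hΔP : 0 ≤ P (c n) - P (c (n - 1)) := sub_nonneg.2 (hP (hmem _) (hmem _) (hc (n.sub_le 1)))
  exact mul_le_mul hΔK (by linarith) hΔP (hK0 _ (hmem n))

theorem mul_le_two_mul_of_block_le (hc0 : c 0 = a) (hKc : ∀ n, K (c n) = 2 * K (c (n + 1)))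
    (hPa : P a = 0) {C : ℝ}
    (hC : ∀ n, (K (c (n - 1)) - K (c n)) * (P (c n) - P (c (n - 1))) ≤ C) (n : ℕ) :
    K (c n) * P (c n) ≤ 2 * C := by
  induction n with
  | zero => simpa [hc0, hPa] using hC 0
  | succ n ih =>
    have h := hC (n + 1)
    simp only [Nat.add_sub_cancel] at h
    have key : K (c (n + 1)) * P (c (n + 1))
        = K (c n) * P (c n) / 2 + (K (c n) - K (c (n + 1))) * (P (c (n + 1)) - P (c n)) := by
      rw [hKc n]; ring
    linarith

theorem eq_zero_of_forall_node_le (hc0 : c 0 = a) (hc : Monotone c) (hcb : ∀ n, c n < b)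
    (hK : AntitoneOn K (Ico a b)) (hK0 : ∀ t ∈ Ico a b, 0 ≤ K t)
    (hKc : ∀ n, K (c n) = 2 * K (c (n + 1))) {t : ℝ} (ht : t ∈ Ico a b) (htc : ∀ n, c n ≤ t) :
    K t = 0 := by
  have hgeom : ∀ n, K (c n) = (1 / 2) ^ n * K a := by
    intro n
    induction n with
    | zero => simp [hc0]
    | succ n ih => rw [pow_succ, mul_right_comm, ← ih, hKc n]; ring
  have hlim : Tendsto (fun n : ℕ => (1 / 2 : ℝ) ^ n * K a) atTop (𝓝 0) := by
    simpa using (tendsto_pow_atTop_nhds_zero_of_lt_one (by norm_num : (0 : ℝ) ≤ 1 / 2)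
      (by norm_num)).mul_const (K a)
  refine le_antisymm (ge_of_tendsto' hlim fun n => ?_) (hK0 t ht)
  rw [← hgeom]
  exact hK (mem_Ico_of_monotone hc0 hc hcb n) ht (htc n)

theorem exists_forall_mem_Ico_mul_le (hK : AntitoneOn K (Ico a b))
    (hK0 : ∀ t ∈ Ico a b, 0 ≤ K t) (hP : MonotoneOn P (Ico a b))
    (hP0 : ∀ t ∈ Ico a b, 0 ≤ P t) {C : ℝ} (hC : ∀ᶠ t in 𝓝[<] b, K t * P t ≤ C) :
    ∃ C', ∀ t ∈ Ico a b, K t * P t ≤ C' := by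
  obtain ⟨t₀, ht₀b, ht₀⟩ := mem_nhdsLT_iff_exists_Ioo_subset.1 hC
  refine ⟨max C (K a * P (max a t₀)), fun t ht => ?_⟩
  rcases le_or_gt t (max a t₀) with htle | htgt
  · have ha : a ∈ Ico a b := ⟨le_rfl, ht.1.trans_lt ht.2⟩
    have ht₁ : max a t₀ ∈ Ico a b := ⟨le_max_left _ _, max_lt ha.2 ht₀b⟩
    exact le_max_of_le_right
      (mul_le_mul (hK ha ht ht.1) (hP ht ht₁ htle) (hP0 t ht) (hK0 a ha))
  · exact le_max_of_le_left (ht₀ ⟨(le_max_right _ _).trans_lt htgt, ht.2⟩)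

theorem mul_le_four_mul_of_block_le (hc0 : c 0 = a) (hc : Monotone c) (hcb : ∀ n, c n < b)
    (hK : AntitoneOn K (Ico a b)) (hK0 : ∀ t ∈ Ico a b, 0 ≤ K t)
    (hKc : ∀ n, K (c n) = 2 * K (c (n + 1))) (hP : MonotoneOn P (Ico a b)) (hPa : P a = 0)
    {C : ℝ} (hC : ∀ n, (K (c (n - 1)) - K (c n)) * (P (c n) - P (c (n - 1))) ≤ C)
    {t : ℝ} (ht : t ∈ Ico a b) :
    K t * P t ≤ 4 * C := by
  have hmem := mem_Ico_of_monotone hc0 hc hcb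
  have hnodes := mul_le_two_mul_of_block_le hc0 hKc hPa hC
  rcases exists_mem_Ico_or_forall_le (hc0 ▸ ht.1 : c 0 ≤ t) with ⟨n, htn⟩ | htc
  · have hPt : 0 ≤ P t := hPa ▸ hP ⟨le_rfl, ht.1.trans_lt ht.2⟩ ht ht.1
    calc K t * P t ≤ K (c n) * P (c (n + 1)) :=
          mul_le_mul (hK (hmem n) ht htn.1) (hP ht (hmem _) htn.2.le) hPt (hK0 _ (hmem n))
      _ = 2 * (K (c (n + 1)) * P (c (n + 1))) := by rw [hKc n]; ring
      _ ≤ 4 * C := by linarith [hnodes (n + 1)]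
  · have hC0 := hnodes 0
    rw [hc0, hPa, mul_zero] at hC0
    rw [eq_zero_of_forall_node_le hc0 hc hcb hK hK0 hKc ht htc, zero_mul]
    linarith

theorem exists_block_le_iff (hc0 : c 0 = a) (hc : Monotone c) (hcb : ∀ n, c n < b)
    (hK : AntitoneOn K (Ico a b)) (hK0 : ∀ t ∈ Ico a b, 0 ≤ K t)
    (hKc : ∀ n, K (c n) = 2 * K (c (n + 1))) (hP : MonotoneOn P (Ico a b)) (hPa : P a = 0) :
    (∃ C, ∀ n, (K (c (n - 1)) - K (c n)) * (P (c n) - P (c (n - 1))) ≤ C) ↔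
      ∃ C, ∀ᶠ t in 𝓝[<] b, K t * P t ≤ C := by
  have hab : a < b := hc0 ▸ hcb 0
  constructor
  · rintro ⟨C, hC⟩
    exact ⟨4 * C, eventually_of_mem (Ico_mem_nhdsLT hab) fun t ht =>
      mul_le_four_mul_of_block_le hc0 hc hcb hK hK0 hKc hP hPa hC ht⟩
  · rintro ⟨C, hC⟩
    have hP0 : ∀ t ∈ Ico a b, 0 ≤ P t := fun t ht => hPa ▸ hP ⟨le_rfl, hab⟩ ht ht.1
    obtain ⟨C', hC'⟩ := exists_forall_mem_Ico_mul_le hK hK0 hP hP0 hC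
    exact ⟨C', fun n => (block_le_mul hc0 hc hcb hK0 hKc hP hPa n).trans
      (hC' _ (mem_Ico_of_monotone hc0 hc hcb n))⟩

end DyadicBlocks

theorem omega_bounded_iff_Omega_bounded_general
    (a b : ℝ) (κ φ : ℝ → ℂ)
    (hκL2 : IntegrableOn (fun s => ‖κ s‖ ^ 2) (Ioo a b))
    (hφL2 : ∀ c ∈ Ioo a b, IntegrableOn (fun s => ‖φ s‖ ^ 2) (Ioo a c))
    (c : ℕ → ℝ) (hc0 : c 0 = a) (hcmono : StrictMono c) (hcb : ∀ n, c n < b)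
    (htail : ∀ n, ∫ s in Ioo (c n) b, ‖κ s‖ ^ 2
      = (1/2 : ℝ) ^ n * ∫ s in Ioo a b, ‖κ s‖ ^ 2)
    (Ω : ℝ → ℝ)
    (hΩ : ∀ t, Ω t = Real.sqrt (∫ s in Ioo t b, ‖κ s‖ ^ 2) *
      Real.sqrt (∫ s in Ioo a t, ‖φ s‖ ^ 2))
    (ω : ℕ → ℝ)
    (hω : ∀ n, ω n = Real.sqrt (∫ s in Ioo (c (n - 1)) (c n), ‖κ s‖ ^ 2) *
      Real.sqrt (∫ s in Ioo (c (n - 1)) (c n), ‖φ s‖ ^ 2)) :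
    (∃ C : ℝ, ∀ n, ω n ≤ C) ↔ (∃ C : ℝ, ∀ᶠ t in 𝓝[<] b, Ω t ≤ C) := by
  set K : ℝ → ℝ := fun t => ∫ s in Ioo t b, ‖κ s‖ ^ 2
  set P : ℝ → ℝ := fun t => ∫ s in Ioo a t, ‖φ s‖ ^ 2
  have hsq : ∀ f : ℝ → ℂ, 0 ≤ fun s => ‖f s‖ ^ 2 := fun f s => sq_nonneg _
  have hK0 : ∀ t, 0 ≤ K t := fun t => setIntegral_nonneg measurableSet_Ioo fun s _ => hsq κ s
  have hφ : ∀ t ∈ Ico a b, IntegrableOn (fun s => ‖φ s‖ ^ 2) (Ioo a t) := by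
    rintro t ⟨hat, htb⟩
    rcases hat.eq_or_lt with rfl | hat
    · simp
    · exact hφL2 t ⟨hat, htb⟩
  have hmem := mem_Ico_of_monotone hc0 hcmono.monotone hcb
  have hω' : ∀ n, ω n = √((K (c (n - 1)) - K (c n)) * (P (c n) - P (c (n - 1)))) := by
    intro n
    have hle := hcmono.monotone (n.sub_le 1)
    have hKsplit := setIntegral_Ioo_add_setIntegral_Ioo hle (hcb n).le
      (hκL2.mono_set (Ioo_subset_Ioo_left (hmem _).1))
    have hPsplit := setIntegral_Ioo_add_setIntegral_Ioo (hmem _).1 hle (hφ _ (hmem n))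
    rw [hω, ← Real.sqrt_mul (setIntegral_nonneg measurableSet_Ioo fun s _ => hsq κ s)]
    congr 2 <;> linarith
  have hΩ' : ∀ t, Ω t = √(K t * P t) := fun t => by rw [hΩ, Real.sqrt_mul (hK0 t)]
  have hKc : ∀ n, K (c n) = 2 * K (c (n + 1)) := fun n => by
    simp only [K, htail]; ring
  simp only [hω', hΩ', Real.exists_forall_sqrt_le_iff, Real.exists_eventually_sqrt_le_iff]
  exact exists_block_le_iff hc0 hcmono.monotone hcb
    ((antitoneOn_setIntegral_Ioo_left hκL2 (hsq κ)).mono Ico_subset_Ici_self)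
    (fun t _ => hK0 t) hKc (monotoneOn_setIntegral_Ioo_right hφ (hsq φ)) (by simp [P])

theorem omega_bounded_iff_Omega_bounded
    (a b : ℝ) (hab : a < b) (κ φ : ℝ → ℂ)
    (hκmeas : Measurable κ) (hφmeas : Measurable φ)
    (hκL2 : IntegrableOn (fun s => ‖κ s‖ ^ 2) (Ioo a b))
    (hκpos : 0 < ∫ s in Ioo a b, ‖κ s‖ ^ 2)
    (hφL2 : ∀ c ∈ Ioo a b, IntegrableOn (fun s => ‖φ s‖ ^ 2) (Ioo a c))
    (c : ℕ → ℝ) (hc0 : c 0 = a) (hcmono : StrictMono c) (hcb : ∀ n, c n < b)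
    (htail : ∀ n, ∫ s in Ioo (c n) b, ‖κ s‖ ^ 2
      = (1/2 : ℝ) ^ n * ∫ s in Ioo a b, ‖κ s‖ ^ 2)
    (Ω : ℝ → ℝ)
    (hΩ : ∀ t, Ω t = Real.sqrt (∫ s in Ioo t b, ‖κ s‖ ^ 2) *
      Real.sqrt (∫ s in Ioo a t, ‖φ s‖ ^ 2))
    (ω : ℕ → ℝ)
    (hω : ∀ n, ω n = Real.sqrt (∫ s in Ioo (c (n - 1)) (c n), ‖κ s‖ ^ 2) *
      Real.sqrt (∫ s in Ioo (c (n - 1)) (c n), ‖φ s‖ ^ 2)) :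
    (∃ C : ℝ, ∀ n, ω n ≤ C) ↔ (∃ C : ℝ, ∀ᶠ t in 𝓝[<] b, Ω t ≤ C) :=
  omega_bounded_iff_Omega_bounded_general a b κ φ hκL2 hφL2 c hc0 hcmono hcb htail Ω hΩ ω hω
end

section
/- Let h₁ : (0,∞) → [0,1] be measurable with ∫_0^∞ h₁ < ∞, p(t) := sup_{x≥t}(x ∫_x^∞ h₁(s) ds)^{1/2}, m₃(t) = ∫_0^t h₃ with h₃² ≤ h₁ a.e., and let λ ∈ ℝ, t₀ > 0 with 2|λ| p(t₀) < 1. Then for all t ≥ t₀: ∫_t^∞ h₁(s) e^{2λ(m₃(s)−m₃(t))} ds ≤ (p(t)²/t) · e/(1 − 2|λ|p(t₀)). -/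
/-!
Write `H x = ∫_x^∞ h₁`, so that `H x ≤ p(t)² / x` for `x ≥ t`. If a weight has the form
`w s = w t + ∫_t^s g`, Fubini turns `∫_t^∞ h₁ w` into `w t · H t + ∫_t^∞ g H`, which is at most
`p(t)² (w t / t + ∫_t^∞ g x / x dx)`. The weight `min u s` bounds `∫_t^s u h₁(u) du` by
`p(t)² (1 + log (s/t))`; as `h₃² ≤ (u h₁) · u⁻¹`, Cauchy–Schwarz then gives
`|m₃ s - m₃ t| ≤ p(t) (1 + log (s/t))`, i.e. `e^{2λ(m₃ s - m₃ t)} ≤ e^a (s/t)^a` with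
`a = 2|λ| p(t) ≤ 2|λ| p(t₀) < 1`. Finally the weight `(s/t)^a` gives
`∫_t^∞ h₁ (s/t)^a ≤ p(t)² / (t (1 - a))`.
-/

open MeasureTheory Set Real
open scoped ENNReal

theorem integrableOn_Ioo_inv {t s : ℝ} (ht : 0 < t) : IntegrableOn (fun x : ℝ => x⁻¹) (Ioo t s) :=
  ((continuousOn_inv₀.mono fun _ hx => (ht.trans_le hx.1).ne').integrableOn_Icc).mono_set
    Ioo_subset_Icc_self

theorem integral_Ioo_inv {t s : ℝ} (ht : 0 < t) (hts : t ≤ s) :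
    ∫ x in Ioo t s, x⁻¹ = log (s / t) := by
  rw [← integral_Ioc_eq_integral_Ioo, ← intervalIntegral.integral_of_le hts, integral_inv]
  rw [uIcc_of_le hts]
  exact fun h => ht.not_ge h.1

theorem lintegral_Ioo_ofReal_div {t s C : ℝ} (hC : 0 ≤ C) (ht : 0 < t) (hts : t ≤ s) :
    ∫⁻ x in Ioo t s, ENNReal.ofReal (C / x) = ENNReal.ofReal (C * log (s / t)) := by
  rw [← integral_Ioo_inv ht hts, ← integral_const_mul, ofReal_integral_eq_lintegral_ofReal]
  · rfl
  · exact (integrableOn_Ioo_inv ht).const_mul C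
  · filter_upwards [ae_restrict_mem measurableSet_Ioo] with x hx
    exact mul_nonneg hC (inv_nonneg.2 (ht.trans hx.1).le)

theorem lintegral_Ioi_ofReal_rpow {t r : ℝ} (ht : 0 < t) (hr : r < -1) :
    ∫⁻ x in Ioi t, ENNReal.ofReal (x ^ r) = ENNReal.ofReal (-t ^ (r + 1) / (r + 1)) := by
  rw [← integral_Ioi_rpow_of_lt hr ht, ofReal_integral_eq_lintegral_ofReal
    (integrableOn_Ioi_rpow_of_lt hr ht)]
  filter_upwards [ae_restrict_mem measurableSet_Ioi] with x hx
  exact rpow_nonneg (ht.trans hx).le _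

theorem ofReal_div_rpow_eq_one_add_lintegral {t s a : ℝ} (ht : 0 < t) (hts : t ≤ s)
    (ha : 0 ≤ a) :
    ENNReal.ofReal ((s / t) ^ a)
      = 1 + ∫⁻ x in Ioo t s, ENNReal.ofReal (a * x ^ (a - 1) / t ^ a) := by
  have hcont : ContinuousOn (fun x : ℝ => a * x ^ (a - 1) / t ^ a) (Icc t s) :=
    ((continuousOn_id.rpow_const fun x hx => Or.inl (ht.trans_le hx.1).ne').const_smul
      a).div_const _
  have hFTC : ∫ x in Ioo t s, a * x ^ (a - 1) / t ^ a = (s / t) ^ a - 1 := by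
    rw [← integral_Ioc_eq_integral_Ioo, ← intervalIntegral.integral_of_le hts,
      intervalIntegral.integral_eq_sub_of_hasDerivAt (f := fun x => x ^ a / t ^ a)]
    · rw [div_rpow (ht.le.trans hts) ht.le, div_self (rpow_pos_of_pos ht a).ne']
    · intro x hx
      rw [uIcc_of_le hts] at hx
      exact (hasDerivAt_rpow_const (Or.inl (ht.trans_le hx.1).ne')).div_const _
    · exact (hcont.mono (uIcc_of_le hts).subset).intervalIntegrable
  rw [← ofReal_integral_eq_lintegral_ofReal (hcont.integrableOn_Icc.mono_set Ioo_subset_Icc_self),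
    hFTC, ← ENNReal.ofReal_one, ← ENNReal.ofReal_add zero_le_one, add_sub_cancel]
  · exact sub_nonneg.2 (one_le_rpow ((one_le_div ht).2 hts) ha)
  · filter_upwards [ae_restrict_mem measurableSet_Ioo] with x hx
    have := rpow_pos_of_pos (ht.trans hx.1) (a - 1)
    positivity

theorem setIntegral_Ioo_sub_setIntegral_Ioo {f : ℝ → ℝ} {a b c : ℝ} (hab : a ≤ b) (hbc : b ≤ c)
    (hf : IntegrableOn f (Ioo a c)) :
    (∫ x in Ioo a c, f x) - ∫ x in Ioo a b, f x = ∫ x in Ioo b c, f x := by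
  have hac := hab.trans hbc
  have hf' : IntervalIntegrable f volume a c :=
    (intervalIntegrable_iff_integrableOn_Ioo_of_le hac).2 hf
  simp only [← integral_Ioc_eq_integral_Ioo, ← intervalIntegral.integral_of_le, hab, hbc, hac]
  refine intervalIntegral.integral_interval_sub_left hf' (hf'.mono_set ?_)
  rw [uIcc_of_le hab, uIcc_of_le hac]
  exact Icc_subset_Icc_right hbc

theorem lintegral_Ioi_mul_lintegral_Ioo (t : ℝ) {f g : ℝ → ℝ≥0∞} (hf : Measurable f)
    (hg : Measurable g) :
    ∫⁻ y in Ioi t, f y * ∫⁻ x in Ioo t y, g x = ∫⁻ x in Ioi t, g x * ∫⁻ y in Ioi x, f y := by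
  set φ : ℝ × ℝ → ℝ≥0∞ := {q | q.2 < q.1}.indicator fun q => f q.1 * g q.2
  have hφ : Measurable φ :=
    ((hf.comp measurable_fst).mul (hg.comp measurable_snd)).indicator
      (measurableSet_lt measurable_snd measurable_fst)
  have hleft : ∀ y, f y * ∫⁻ x in Ioo t y, g x = ∫⁻ x in Ioi t, φ (y, x) := by
    intro y
    rw [← lintegral_const_mul _ hg, ← Iio_inter_Ioi, ← Measure.restrict_restrict measurableSet_Iio,
      ← lintegral_indicator measurableSet_Iio]
    congr 1 with x
  have hright : ∀ x ∈ Ioi t, g x * ∫⁻ y in Ioi x, f y = ∫⁻ y in Ioi t, φ (y, x) := by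
    intro x hx
    rw [← lintegral_const_mul _ hf, ← Ioi_inter_Ioi.trans (congrArg Ioi (max_eq_left hx.out.le)),
      ← Measure.restrict_restrict measurableSet_Ioi, ← lintegral_indicator measurableSet_Ioi]
    congr 1 with y
    by_cases hy : x < y <;> simp [φ, hy, mul_comm]
  simp_rw [hleft]
  rw [setLIntegral_congr_fun measurableSet_Ioi hright]
  exact lintegral_lintegral_swap hφ.aemeasurable

section TailBound

variable {f : ℝ → ℝ≥0∞} {t C : ℝ}

theorem lintegral_Ioi_mul_add_lintegral_Ioo_le (hf : Measurable f)
    (htail : ∀ x, t ≤ x → ∫⁻ y in Ioi x, f y ≤ ENNReal.ofReal (C / x)) (c : ℝ≥0∞)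
    {g : ℝ → ℝ≥0∞} (hg : Measurable g) :
    ∫⁻ s in Ioi t, f s * (c + ∫⁻ x in Ioo t s, g x)
      ≤ c * ENNReal.ofReal (C / t) + ∫⁻ x in Ioi t, g x * ENNReal.ofReal (C / x) := by
  simp_rw [mul_add]
  rw [lintegral_add_left (hf.mul_const c), lintegral_mul_const _ hf,
    lintegral_Ioi_mul_lintegral_Ioo t hf hg, mul_comm c]
  gcongr ?_ * _ + ?_
  · exact htail t le_rfl
  · exact setLIntegral_mono' measurableSet_Ioi fun x hx => by gcongr; exact htail x hx.out.le

theorem lintegral_Ioo_ofReal_mul_le (hf : Measurable f)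
    (htail : ∀ x, t ≤ x → ∫⁻ y in Ioi x, f y ≤ ENNReal.ofReal (C / x)) (hC : 0 ≤ C)
    (ht : 0 < t) {s : ℝ} (hts : t ≤ s) :
    ∫⁻ u in Ioo t s, ENNReal.ofReal u * f u ≤ ENNReal.ofReal (C * (1 + log (s / t))) := by
  set g : ℝ → ℝ≥0∞ := (Iio s).indicator 1
  have hweight : ∀ u ∈ Ioo t s, ENNReal.ofReal u = ENNReal.ofReal t + ∫⁻ x in Ioo t u, g x := by
    intro u hu
    have hg : ∀ x ∈ Ioo t u, g x = 1 := fun x hx => by simp [g, hx.2.trans hu.2]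
    rw [setLIntegral_congr_fun measurableSet_Ioo hg, setLIntegral_one, volume_Ioo,
      ← ENNReal.ofReal_add ht.le (sub_nonneg.2 hu.1.le), add_sub_cancel]
  calc ∫⁻ u in Ioo t s, ENNReal.ofReal u * f u
      = ∫⁻ u in Ioo t s, f u * (ENNReal.ofReal t + ∫⁻ x in Ioo t u, g x) :=
        setLIntegral_congr_fun measurableSet_Ioo fun u hu => by rw [hweight u hu, mul_comm]
    _ ≤ ∫⁻ u in Ioi t, f u * (ENNReal.ofReal t + ∫⁻ x in Ioo t u, g x) :=
        lintegral_mono_set Ioo_subset_Ioi_self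
    _ ≤ ENNReal.ofReal t * ENNReal.ofReal (C / t) + ∫⁻ x in Ioi t, g x * ENNReal.ofReal (C / x) :=
        lintegral_Ioi_mul_add_lintegral_Ioo_le hf htail _
          (measurable_one.indicator measurableSet_Iio)
    _ = ENNReal.ofReal C + ENNReal.ofReal (C * log (s / t)) := by
        congr 1
        · rw [← ENNReal.ofReal_mul ht.le, mul_div_cancel₀ _ ht.ne']
        · rw [← lintegral_Ioo_ofReal_div hC ht hts, ← Iio_inter_Ioi,
            ← Measure.restrict_restrict measurableSet_Iio, ← lintegral_indicator measurableSet_Iio]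
          congr 1 with x
          by_cases hx : x < s <;> simp [g, hx]
    _ = ENNReal.ofReal (C * (1 + log (s / t))) := by
        rw [← ENNReal.ofReal_add hC (mul_nonneg hC (log_nonneg ((one_le_div ht).2 hts))),
          mul_one_add]

theorem lintegral_Ioi_mul_div_rpow_le (hf : Measurable f)
    (htail : ∀ x, t ≤ x → ∫⁻ y in Ioi x, f y ≤ ENNReal.ofReal (C / x)) (hC : 0 ≤ C)
    (ht : 0 < t) {a : ℝ} (ha₀ : 0 ≤ a) (ha₁ : a < 1) :
    ∫⁻ s in Ioi t, f s * ENNReal.ofReal ((s / t) ^ a) ≤ ENNReal.ofReal (C / t / (1 - a)) := by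
  have hta := rpow_pos_of_pos ht a
  calc ∫⁻ s in Ioi t, f s * ENNReal.ofReal ((s / t) ^ a)
      = ∫⁻ s in Ioi t, f s *
          (1 + ∫⁻ x in Ioo t s, ENNReal.ofReal (a * x ^ (a - 1) / t ^ a)) :=
        setLIntegral_congr_fun measurableSet_Ioi fun s hs => by
          rw [ofReal_div_rpow_eq_one_add_lintegral ht hs.out.le ha₀]
    _ ≤ 1 * ENNReal.ofReal (C / t)
          + ∫⁻ x in Ioi t, ENNReal.ofReal (a * x ^ (a - 1) / t ^ a) * ENNReal.ofReal (C / x) :=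
        lintegral_Ioi_mul_add_lintegral_Ioo_le hf htail _ (by fun_prop)
    _ = ENNReal.ofReal (C / t)
          + ENNReal.ofReal (a * C / t ^ a) * ∫⁻ x in Ioi t, ENNReal.ofReal (x ^ (a - 2)) := by
        rw [one_mul, ← lintegral_const_mul' _ _ ENNReal.ofReal_ne_top]
        congr 1
        refine setLIntegral_congr_fun measurableSet_Ioi fun x hx => ?_
        have hx₀ : 0 < x := ht.trans hx
        have := rpow_pos_of_pos hx₀ (a - 1)
        rw [← ENNReal.ofReal_mul (by positivity), ← ENNReal.ofReal_mul (by positivity),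
          show a - 2 = a - 1 - 1 by ring, rpow_sub_one hx₀.ne' (a - 1)]
        congr 1
        field_simp
    _ = ENNReal.ofReal (C / t / (1 - a)) := by
        rw [lintegral_Ioi_ofReal_rpow ht (by linarith), ← ENNReal.ofReal_mul (by positivity),
          ← ENNReal.ofReal_add (by positivity)]
        · congr 1
          have : a - 1 ≠ 0 := by linarith
          have : 1 - a ≠ 0 := by linarith
          rw [show a - 2 + 1 = a - 1 by ring, rpow_sub_one ht.ne']
          field_simp
          ring
        · exact mul_nonneg (by positivity)
            (div_nonneg_of_nonpos (neg_nonpos.2 (rpow_nonneg ht.le _)) (by linarith))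

end TailBound

theorem le_mul_of_forall_le_mul_add_inv {X K P : ℝ} (hK : 0 ≤ K) (hP : 0 ≤ P)
    (h : ∀ c > 0, X ≤ K * (c * P ^ 2 + c⁻¹) / 2) : X ≤ K * P := by
  rcases hP.eq_or_lt with rfl | hP
  · by_contra! hX
    have hX₀ : 0 < X := by simpa using hX
    have := h (K / X + 1) (by positivity)
    rw [zero_pow two_ne_zero, mul_zero, zero_add, le_div_iff₀ two_pos] at this
    field_simp at this
    nlinarith [mul_pos hX₀ hX₀]
  · have := h P⁻¹ (inv_pos.2 hP)
    rwa [inv_inv, show P⁻¹ * P ^ 2 + P = 2 * P by field_simp; ring, mul_div_assoc,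
      mul_div_cancel_left₀ _ two_ne_zero] at this

theorem integral_abs_le_of_sq_le_mul {α : Type*} [MeasurableSpace α] {μ : Measure α}
    {f g k : α → ℝ} (hg : Integrable g μ) (hk : Integrable k μ) (hg₀ : 0 ≤ᵐ[μ] g)
    (hk₀ : 0 ≤ᵐ[μ] k) (hfgk : ∀ᵐ x ∂μ, f x ^ 2 ≤ g x * k x) {P K : ℝ} (hP : 0 ≤ P)
    (hgP : ∫ x, g x ∂μ ≤ P ^ 2 * K) (hkK : ∫ x, k x ∂μ ≤ K) :
    ∫ x, |f x| ∂μ ≤ P * K := by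
  rw [mul_comm]
  refine le_mul_of_forall_le_mul_add_inv ((integral_nonneg_of_ae hk₀).trans hkK) hP
    fun c hc => ?_
  have hamgm : ∀ᵐ x ∂μ, |f x| ≤ (c * g x + c⁻¹ * k x) / 2 := by
    filter_upwards [hg₀, hk₀, hfgk] with x hgx hkx hx
    have hsq : (2 * c * |f x|) ^ 2 ≤ (c ^ 2 * g x + k x) ^ 2 := by
      nlinarith [sq_abs (f x), sq_nonneg (c ^ 2 * g x - k x)]
    have := abs_le_of_sq_le_sq' hsq (add_nonneg (mul_nonneg (sq_nonneg c) hgx) hkx)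
    rw [le_div_iff₀ two_pos, ← mul_le_mul_iff_of_pos_left hc]
    field_simp
    nlinarith [this.2]
  calc ∫ x, |f x| ∂μ ≤ ∫ x, (c * g x + c⁻¹ * k x) / 2 ∂μ :=
        integral_mono_of_nonneg (ae_of_all _ fun _ => abs_nonneg _)
          (((hg.const_mul c).add (hk.const_mul c⁻¹)).div_const 2) hamgm
    _ = (c * ∫ x, g x ∂μ + c⁻¹ * ∫ x, k x ∂μ) / 2 := by
        rw [integral_div, integral_add (hg.const_mul c) (hk.const_mul c⁻¹), integral_const_mul,
          integral_const_mul]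
    _ ≤ (c * (P ^ 2 * K) + c⁻¹ * K) / 2 := by gcongr
    _ = K * (c * P ^ 2 + c⁻¹) / 2 := by ring

theorem integral_Ioo_abs_le_mul_one_add_log {h₁ h₃ : ℝ → ℝ} {t s P : ℝ} (hh₁ : Measurable h₁)
    (htail : ∀ x, t ≤ x → ∫⁻ y in Ioi x, ENNReal.ofReal (h₁ y) ≤ ENNReal.ofReal (P ^ 2 / x))
    (hP : 0 ≤ P) (ht : 0 < t) (hts : t ≤ s) (hint : IntegrableOn h₁ (Ioo t s))
    (hsq : ∀ᵐ u ∂volume.restrict (Ioo t s), h₃ u ^ 2 ≤ h₁ u) :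
    ∫ u in Ioo t s, |h₃ u| ≤ P * (1 + log (s / t)) := by
  have hmem := ae_restrict_mem (μ := volume) (measurableSet_Ioo (a := t) (b := s))
  have hlog : 0 ≤ log (s / t) := log_nonneg ((one_le_div ht).2 hts)
  have hmoment_nonneg : 0 ≤ᵐ[volume.restrict (Ioo t s)] fun u => u * h₁ u := by
    filter_upwards [hmem, hsq] with u hu hsqu
    exact mul_nonneg (ht.trans hu.1).le ((sq_nonneg _).trans hsqu)
  have hmoment : ∫ u in Ioo t s, u * h₁ u ≤ P ^ 2 * (1 + log (s / t)) := by
    rw [integral_eq_lintegral_of_nonneg_ae hmoment_nonneg (by fun_prop)]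
    refine ENNReal.toReal_le_of_le_ofReal (by positivity) ?_
    calc ∫⁻ u in Ioo t s, ENNReal.ofReal (u * h₁ u)
        = ∫⁻ u in Ioo t s, ENNReal.ofReal u * ENNReal.ofReal (h₁ u) :=
          setLIntegral_congr_fun measurableSet_Ioo fun u hu =>
            ENNReal.ofReal_mul (ht.trans hu.1).le
      _ ≤ ENNReal.ofReal (P ^ 2 * (1 + log (s / t))) :=
          lintegral_Ioo_ofReal_mul_le hh₁.ennreal_ofReal htail (sq_nonneg P) ht hts
  refine integral_abs_le_of_sq_le_mul (g := fun u => u * h₁ u) (k := fun u => u⁻¹)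
    (hint.bdd_mul (c := s) (by fun_prop) ?_) (integrableOn_Ioo_inv ht) hmoment_nonneg ?_ ?_ hP
    hmoment ((integral_Ioo_inv ht hts).trans_le (by linarith))
  · filter_upwards [hmem] with u hu
    rw [norm_of_nonneg (ht.trans hu.1).le]
    exact hu.2.le
  · filter_upwards [hmem] with u hu
    exact inv_nonneg.2 (ht.trans hu.1).le
  · filter_upwards [hmem, hsq] with u hu hsqu
    rwa [mul_comm, inv_mul_cancel_left₀ (ht.trans hu.1).ne']

theorem abs_setIntegral_Ioo_sub_le_mul_one_add_log {h₁ h₃ : ℝ → ℝ} {t s P : ℝ}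
    (hh₁ : Measurable h₁) (hh₃ : Measurable h₃)
    (hbd : ∀ᵐ u ∂volume.restrict (Ioi 0), h₁ u ≤ 1 ∧ h₃ u ^ 2 ≤ h₁ u)
    (hint : IntegrableOn h₁ (Ioi 0))
    (htail : ∀ x, t ≤ x → ∫⁻ y in Ioi x, ENNReal.ofReal (h₁ y) ≤ ENNReal.ofReal (P ^ 2 / x))
    (hP : 0 ≤ P) (ht : 0 < t) (hts : t ≤ s) :
    |(∫ u in Ioo 0 s, h₃ u) - ∫ u in Ioo 0 t, h₃ u| ≤ P * (1 + log (s / t)) := by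
  have hbd_s : ∀ᵐ u ∂volume.restrict (Ioo 0 s), h₁ u ≤ 1 ∧ h₃ u ^ 2 ≤ h₁ u :=
    ae_restrict_of_ae_restrict_of_subset Ioo_subset_Ioi_self hbd
  have h₃int : IntegrableOn h₃ (Ioo 0 s) :=
    Measure.integrableOn_of_bounded measure_Ioo_lt_top.ne hh₃.aestronglyMeasurable (M := 1)
      (hbd_s.mono fun _ h => by
        rw [norm_eq_abs, ← sq_le_one_iff_abs_le_one]; exact h.2.trans h.1)
  rw [setIntegral_Ioo_sub_setIntegral_Ioo ht.le hts h₃int]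
  exact abs_integral_le_integral_abs.trans <|
    integral_Ioo_abs_le_mul_one_add_log hh₁ htail hP ht hts
      (hint.mono_set (Ioo_subset_Ioi_self.trans (Ioi_subset_Ioi ht.le)))
      ((ae_restrict_of_ae_restrict_of_subset (Ioo_subset_Ioo_left ht.le) hbd_s).mono
        fun _ h => h.2)

theorem exp_two_mul_le_exp_mul_rpow {lam D P r : ℝ} (hr : 0 < r) (hD : |D| ≤ P * (1 + log r)) :
    exp (2 * lam * D) ≤ exp (2 * |lam| * P) * r ^ (2 * |lam| * P) := by
  rw [rpow_def_of_pos hr, ← exp_add, exp_le_exp]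
  calc 2 * lam * D ≤ 2 * |lam| * |D| := by
        rw [mul_assoc, mul_assoc]
        exact mul_le_mul_of_nonneg_left ((le_abs_self _).trans (abs_mul lam D).le) two_pos.le
    _ ≤ 2 * |lam| * (P * (1 + log r)) := by gcongr
    _ = 2 * |lam| * P + log r * (2 * |lam| * P) := by ring

noncomputable def tailSup (h : ℝ → ℝ) (t : ℝ) : ℝ :=
  ⨆ x : {x : ℝ // t ≤ x}, √(x.1 * ∫ s in Ioi x.1, h s)

section TailSup

variable {h : ℝ → ℝ} {t : ℝ}

theorem sqrt_le_tailSup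
    (hbdd : BddAbove (range fun x : {x : ℝ // t ≤ x} => √(x.1 * ∫ s in Ioi x.1, h s)))
    {x : ℝ} (hx : t ≤ x) : √(x * ∫ s in Ioi x, h s) ≤ tailSup h t :=
  le_ciSup hbdd ⟨x, hx⟩

theorem tailSup_nonneg
    (hbdd : BddAbove (range fun x : {x : ℝ // t ≤ x} => √(x.1 * ∫ s in Ioi x.1, h s))) :
    0 ≤ tailSup h t :=
  (sqrt_nonneg _).trans (sqrt_le_tailSup hbdd le_rfl)

theorem tailSup_le_of_le {t₀ : ℝ}
    (hbdd : BddAbove (range fun x : {x : ℝ // t₀ ≤ x} => √(x.1 * ∫ s in Ioi x.1, h s)))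
    (ht : t₀ ≤ t) : tailSup h t ≤ tailSup h t₀ :=
  ciSup_le fun x => sqrt_le_tailSup hbdd (ht.trans x.2)

theorem lintegral_Ioi_ofReal_le_tailSup_sq_div
    (hbdd : BddAbove (range fun x : {x : ℝ // t ≤ x} => √(x.1 * ∫ s in Ioi x.1, h s)))
    (hint : IntegrableOn h (Ioi 0)) (h₀ : ∀ᵐ s ∂volume.restrict (Ioi 0), 0 ≤ h s) (ht : 0 < t)
    (x : ℝ) (hx : t ≤ x) :
    ∫⁻ s in Ioi x, ENNReal.ofReal (h s) ≤ ENNReal.ofReal (tailSup h t ^ 2 / x) := by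
  have hx₀ : 0 < x := ht.trans_le hx
  have hsub : Ioi x ⊆ Ioi 0 := Ioi_subset_Ioi hx₀.le
  rw [← ofReal_integral_eq_lintegral_ofReal (hint.mono_set hsub)
    (ae_restrict_of_ae_restrict_of_subset hsub h₀)]
  gcongr
  rw [le_div_iff₀ hx₀, mul_comm]
  exact (sqrt_le_iff.1 (sqrt_le_tailSup hbdd hx)).2

end TailSup

theorem first_integral_bound_kac
    (h₁ h₃ : ℝ → ℝ) (hmeas₁ : Measurable h₁) (hmeas₃ : Measurable h₃)
    (hbd : ∀ᵐ s ∂(volume.restrict (Ioi (0:ℝ))),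
      0 ≤ h₁ s ∧ h₁ s ≤ 1 ∧ h₃ s ^ 2 ≤ h₁ s)
    (hint₁ : IntegrableOn h₁ (Ioi (0:ℝ)))
    (m₃ : ℝ → ℝ) (hm₃ : ∀ t, m₃ t = ∫ s in Ioo 0 t, h₃ s)
    (p : ℝ → ℝ)
    (hp : ∀ t, p t = ⨆ x : {x : ℝ // t ≤ x}, Real.sqrt (x.1 * ∫ s in Ioi x.1, h₁ s))
    (hpfin : ∀ t : ℝ, 0 < t →
      BddAbove (Set.range fun x : {x : ℝ // t ≤ x} =>
        Real.sqrt (x.1 * ∫ s in Ioi x.1, h₁ s)))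
    (lam t₀ : ℝ) (ht₀ : 0 < t₀) (hsmall : 2 * |lam| * p t₀ < 1) :
    ∀ t : ℝ, t₀ ≤ t →
      ∫⁻ s in Ioi t, ENNReal.ofReal (h₁ s * Real.exp (2 * lam * (m₃ s - m₃ t))) ≤
        ENNReal.ofReal (p t ^ 2 / t * (Real.exp 1 / (1 - 2 * |lam| * p t₀))) := by
  intro t ht
  obtain rfl : p = tailSup h₁ := funext hp
  have ht₀t : 0 < t := ht₀.trans_le ht
  have hp₀ : 0 ≤ tailSup h₁ t := tailSup_nonneg (hpfin t ht₀t)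
  have htail := lintegral_Ioi_ofReal_le_tailSup_sq_div (hpfin t ht₀t) hint₁
    (hbd.mono fun _ h => h.1) ht₀t
  have hincr : ∀ s, t ≤ s → |m₃ s - m₃ t| ≤ tailSup h₁ t * (1 + log (s / t)) := fun s hs => by
    rw [hm₃, hm₃]
    exact abs_setIntegral_Ioo_sub_le_mul_one_add_log hmeas₁ hmeas₃ (hbd.mono fun _ h => h.2)
      hint₁ htail hp₀ ht₀t hs
  set a := 2 * |lam| * tailSup h₁ t
  have ha₀ : 0 ≤ a := by positivity
  have ha : a ≤ 2 * |lam| * tailSup h₁ t₀ :=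
    mul_le_mul_of_nonneg_left (tailSup_le_of_le (hpfin t₀ ht₀) ht) (by positivity)
  calc ∫⁻ s in Ioi t, ENNReal.ofReal (h₁ s * exp (2 * lam * (m₃ s - m₃ t)))
      ≤ ∫⁻ s in Ioi t, ENNReal.ofReal (exp a) *
          (ENNReal.ofReal (h₁ s) * ENNReal.ofReal ((s / t) ^ a)) :=
        setLIntegral_mono' measurableSet_Ioi fun s hs => by
          rw [ENNReal.ofReal_mul' (exp_pos _).le, mul_left_comm,
            ← ENNReal.ofReal_mul (exp_pos _).le]
          gcongr
          exact exp_two_mul_le_exp_mul_rpow (div_pos (ht₀t.trans hs) ht₀t) (hincr s hs.out.le)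
    _ = ENNReal.ofReal (exp a) *
          ∫⁻ s in Ioi t, ENNReal.ofReal (h₁ s) * ENNReal.ofReal ((s / t) ^ a) :=
        lintegral_const_mul' _ _ ENNReal.ofReal_ne_top
    _ ≤ ENNReal.ofReal (exp a) * ENNReal.ofReal (tailSup h₁ t ^ 2 / t / (1 - a)) := by
        gcongr
        exact lintegral_Ioi_mul_div_rpow_le hmeas₁.ennreal_ofReal htail (sq_nonneg _) ht₀t ha₀
          (ha.trans_lt hsmall)
    _ ≤ ENNReal.ofReal (tailSup h₁ t ^ 2 / t * (exp 1 / (1 - 2 * |lam| * tailSup h₁ t₀))) := by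
        rw [← ENNReal.ofReal_mul (exp_pos _).le, mul_div_assoc', mul_comm, mul_div_assoc]
        gcongr
        linarith
end

section
/- Let h₂ : (0,∞) → [0,1] be measurable, p nonincreasing with p(t₀) satisfying 2|λ| p(t₀) < 1, and suppose |m₃(s) − m₃(t)| ≤ p(t)(1 + log(t/s)) for 0 < s < t. Then for t ≥ t₀: ∫_0^t h₂(s) e^{−2λ(m₃(s)−m₃(t))} ds ≤ t · e/(1 − 2|λ|p(t₀)). -/
open MeasureTheory Set Real

/-! With `a = 2|λ| p(t) ≤ 2|λ| p(t₀) < 1`, the oscillation bound on `m₃` dominates the integrand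
on `(0, t)` by `e · (t/s)^a`, which is integrable at `0` because `a < 1`, with
`∫₀ᵗ (t/s)^a ds = t / (1 - a)`. -/

theorem lintegral_Ioo_div_rpow {t a : ℝ} (ht : 0 < t) (ha : a < 1) :
    ∫⁻ s in Ioo 0 t, ENNReal.ofReal ((t / s) ^ a) = ENNReal.ofReal (t / (1 - a)) := by
  have hint : IntegrableOn (fun s : ℝ ↦ s ^ (-a)) (Ioo 0 t) :=
    (intervalIntegrable_iff_integrableOn_Ioo_of_le ht.le).1
      (intervalIntegral.intervalIntegrable_rpow' (by linarith))
  have hnonneg : 0 ≤ᵐ[volume.restrict (Ioo 0 t)] fun s ↦ t ^ a * s ^ (-a) := by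
    filter_upwards [ae_restrict_mem measurableSet_Ioo] with s hs
    exact mul_nonneg (rpow_nonneg ht.le a) (rpow_nonneg hs.1.le _)
  have hpow : ∫ s in (0)..t, s ^ (-a) = t ^ (1 - a) / (1 - a) := by
    rw [integral_rpow (Or.inl (by linarith)), zero_rpow (by linarith), neg_add_eq_sub]
    simp
  calc ∫⁻ s in Ioo 0 t, ENNReal.ofReal ((t / s) ^ a)
      = ∫⁻ s in Ioo 0 t, ENNReal.ofReal (t ^ a * s ^ (-a)) := by
        refine setLIntegral_congr_fun measurableSet_Ioo fun s hs ↦ ?_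
        rw [div_rpow ht.le hs.1.le, rpow_neg hs.1.le, div_eq_mul_inv]
    _ = ENNReal.ofReal (t ^ a * ∫ s in (0)..t, s ^ (-a)) := by
        rw [← ofReal_integral_eq_lintegral_ofReal (hint.const_mul _) hnonneg, integral_const_mul,
          intervalIntegral.integral_of_le ht.le, integral_Ioc_eq_integral_Ioo]
    _ = ENNReal.ofReal (t / (1 - a)) := by
        rw [hpow, mul_div_assoc', ← rpow_add ht, add_sub_cancel, rpow_one]

theorem exp_neg_mul_le_exp_abs_mul {k x B : ℝ} (h : |x| ≤ B) : exp (-(k * x)) ≤ exp (|k| * B) :=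
  exp_le_exp.2 <| calc
    -(k * x) ≤ |k * x| := neg_le_abs _
    _ = |k| * |x| := abs_mul k x
    _ ≤ |k| * B := mul_le_mul_of_nonneg_left h (abs_nonneg k)

theorem exp_mul_one_add_log_le {c r : ℝ} (hc : c ≤ 1) (hr : 0 < r) :
    exp (c * (1 + log r)) ≤ exp 1 * r ^ c := by
  rw [mul_one_add, exp_add, rpow_def_of_pos hr, mul_comm (log r)]
  gcongr

theorem mul_exp_neg_mul_le_of_abs_le {h k x q r : ℝ} (hh : h ≤ 1) (hr : 0 < r)
    (hx : |x| ≤ q * (1 + log r)) (hkq : |k| * q ≤ 1) :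
    h * exp (-(k * x)) ≤ exp 1 * r ^ (|k| * q) := calc
  h * exp (-(k * x)) ≤ exp (-(k * x)) := mul_le_of_le_one_left (exp_pos _).le hh
  _ ≤ exp (|k| * q * (1 + log r)) := mul_assoc |k| q _ ▸ exp_neg_mul_le_exp_abs_mul hx
  _ ≤ exp 1 * r ^ (|k| * q) := exp_mul_one_add_log_le hkq hr

theorem second_integral_bound_kac_general
    (h₂ : ℝ → ℝ)
    (hbd : ∀ᵐ s ∂(volume.restrict (Ioi (0:ℝ))), 0 ≤ h₂ s ∧ h₂ s ≤ 1)
    (m₃ : ℝ → ℝ) (p : ℝ → ℝ)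
    (hpanti : ∀ s t : ℝ, 0 < s → s ≤ t → p t ≤ p s)
    (hm : ∀ s t : ℝ, 0 < s → s < t → |m₃ s - m₃ t| ≤ p t * (1 + Real.log (t / s)))
    (lam t₀ : ℝ) (ht₀ : 0 < t₀) (hsmall : 2 * |lam| * p t₀ < 1) :
    ∀ t : ℝ, t₀ ≤ t →
      ∫⁻ s in Ioo 0 t, ENNReal.ofReal (h₂ s * Real.exp (-(2 * lam * (m₃ s - m₃ t)))) ≤
        ENNReal.ofReal (t * (Real.exp 1 / (1 - 2 * |lam| * p t₀))) := by
  intro t ht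
  have ht0 : 0 < t := ht₀.trans_le ht
  set a := |2 * lam| * p t
  have ha : a ≤ 2 * |lam| * p t₀ := by
    unfold a
    rw [abs_mul, abs_two]
    gcongr
    exact hpanti t₀ t ht₀ ht
  have hkernel : ∀ᵐ s ∂(volume.restrict (Ioo 0 t)),
      ENNReal.ofReal (h₂ s * exp (-(2 * lam * (m₃ s - m₃ t)))) ≤
        ENNReal.ofReal (exp 1) * ENNReal.ofReal ((t / s) ^ a) := by
    filter_upwards [ae_restrict_of_ae_restrict_of_subset Ioo_subset_Ioi_self hbd,
      ae_restrict_mem measurableSet_Ioo] with s hh ⟨hs0, hst⟩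
    rw [← ENNReal.ofReal_mul (exp_pos 1).le]
    exact ENNReal.ofReal_le_ofReal <|
      mul_exp_neg_mul_le_of_abs_le hh.2 (div_pos ht0 hs0) (hm s t hs0 hst) (by linarith)
  calc ∫⁻ s in Ioo 0 t, ENNReal.ofReal (h₂ s * exp (-(2 * lam * (m₃ s - m₃ t))))
      ≤ ∫⁻ s in Ioo 0 t, ENNReal.ofReal (exp 1) * ENNReal.ofReal ((t / s) ^ a) :=
        lintegral_mono_ae hkernel
    _ = ENNReal.ofReal (exp 1 * (t / (1 - a))) := by
        rw [lintegral_const_mul' _ _ ENNReal.ofReal_ne_top, lintegral_Ioo_div_rpow ht0 (by linarith),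
          ENNReal.ofReal_mul (exp_pos 1).le]
    _ ≤ ENNReal.ofReal (t * (exp 1 / (1 - 2 * |lam| * p t₀))) := by
        refine ENNReal.ofReal_le_ofReal ?_
        rw [mul_div_left_comm]
        gcongr

theorem second_integral_bound_kac
    (h₂ : ℝ → ℝ) (hmeas₂ : Measurable h₂)
    (hbd : ∀ᵐ s ∂(volume.restrict (Ioi (0:ℝ))), 0 ≤ h₂ s ∧ h₂ s ≤ 1)
    (m₃ : ℝ → ℝ) (p : ℝ → ℝ) (hpnn : ∀ t, 0 ≤ p t)
    (hpanti : ∀ s t : ℝ, 0 < s → s ≤ t → p t ≤ p s)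
    (hm : ∀ s t : ℝ, 0 < s → s < t → |m₃ s - m₃ t| ≤ p t * (1 + Real.log (t / s)))
    (lam t₀ : ℝ) (ht₀ : 0 < t₀) (hsmall : 2 * |lam| * p t₀ < 1) :
    ∀ t : ℝ, t₀ ≤ t →
      ∫⁻ s in Ioo 0 t, ENNReal.ofReal (h₂ s * Real.exp (-(2 * lam * (m₃ s - m₃ t)))) ≤
        ENNReal.ofReal (t * (Real.exp 1 / (1 - 2 * |lam| * p t₀))) :=
  second_integral_bound_kac_general h₂ hbd m₃ p hpanti hm lam t₀ ht₀ hsmall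
end
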